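/- arXiv:1103.3983 — 9 statements merged into one kernel-verified Lean document; each statement's English description precedes it below -/
import Mathlib

section
/- Let G be a finite simple graph and let g, f : V(G) → ℕ be functions with g(x) ≤ f(x) for all x ∈ V(G). Then G has all fractional (g,f)-factors if and only if for every subset S ⊆ V(G), one has g(S) − f(T) + Σ_{x∈T} d_{G−S}(x) ≥ 0, where T = {v ∈ V(G) − S : d_{G−S}(v) < f(v)}, d_{G−S}(v) denotes the degree of v in the induced subgraph G − S, and g(S) = Σ_{v∈S} g(v), f(T) = Σ_{v∈T} f(v). -/
/-!
Necessity is double counting: for a fractional `q`-factor `h` with `q = g` on `S` and `q = f`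
off `S`, the vertices of `T` need `f(T)` in total, the edges towards `S` carry at most `g(S)`
and those inside `G − S` at most `Σ_{x∈T} d_{G−S}(x)`.

Sufficiency: for `g ≤ q ≤ f` the hypothesis bounds the positive parts of the deficiencies
`q(v) − d_{G−S}(v)` outside `S` by `q(S)`; moving the deficient vertices out of `W` upgrades this
to the cut condition `q(U) ≤ q(W) + e(U, V − W)` for all `U, W`. That is Hall's condition for a
gadget whose perfect matchings are sets `D` of ordered adjacent pairs with exactly `q(v)` pairs
leaving and `q(v)` pairs entering each `v` (a `q`-factor of the bipartite double cover), and
`h(uv) = (1_D(u,v) + 1_D(v,u)) / 2` is a fractional `q`-factor.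
-/

open Finset

/-- `d_{G−S}(v)`. -/
def dOut {V : Type*} [Fintype V] [DecidableEq V] (G : SimpleGraph V) [DecidableRel G.Adj]
    (S : Finset V) (v : V) : ℕ :=
  (G.neighborFinset v \ S).card

def Tset {V : Type*} [Fintype V] [DecidableEq V] (G : SimpleGraph V) [DecidableRel G.Adj]
    (f : V → ℕ) (S : Finset V) : Finset V :=
  Sᶜ.filter fun v => dOut G S v < f v

def IsFracFactor {V : Type*} [Fintype V] [DecidableEq V] (G : SimpleGraph V)
    [DecidableRel G.Adj] (g f : V → ℕ) (h : Sym2 V → ℝ) : Prop :=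
  (∀ e ∈ G.edgeFinset, 0 ≤ h e ∧ h e ≤ 1) ∧
  ∀ x : V, (g x : ℝ) ≤ ∑ e ∈ G.incidenceFinset x, h e ∧
    ∑ e ∈ G.incidenceFinset x, h e ≤ (f x : ℝ)

def HasAllFracFactors {V : Type*} [Fintype V] [DecidableEq V] (G : SimpleGraph V)
    [DecidableRel G.Adj] (g f : V → ℕ) : Prop :=
  ∀ q : V → ℕ, (∀ v, g v ≤ q v) → (∀ v, q v ≤ f v) → ∃ h, IsFracFactor G q q h

section Bipartite

variable {α β : Type*} [Fintype α] [Fintype β] [DecidableEq α] [DecidableEq β]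
  (r : α → β → Prop) [DecidableRel r] (p : α → ℕ) (q : β → ℕ)

/-- Left vertices: `p a` copies of each `a` and one node per pair; right vertices: one node per
pair and `q b` copies of each `b`. A copy of `a` may take any `r`-pair leaving `a`; a pair node
takes either its own node or a copy of its head. A perfect matching `F` yields the factor
`{x | F (.inr x) ≠ .inl x}`. -/
def copyGadget : (Σ a, Fin (p a)) ⊕ (α × β) → (α × β) ⊕ (Σ b, Fin (q b)) → Prop
  | .inl s, .inl x => x.1 = s.1 ∧ r x.1 x.2
  | .inl _, .inr _ => False
  | .inr x, .inl y => y = x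
  | .inr x, .inr t => t.1 = x.2 ∧ r x.1 x.2

variable {r p q} [DecidableRel (copyGadget r p q)] (L : Finset ((Σ a, Fin (p a)) ⊕ (α × β)))

lemma subset_copyGadget_image :
    (({x : α × β | x.1 ∈ L.toLeft.image Sigma.fst ∧ r x.1 x.2} : Finset _) ∪ L.toRight).map .inl ∪
      (({x ∈ L.toRight | r x.1 x.2}.image Prod.snd).sigma fun _ => univ).map .inr ⊆
      ({t | ∃ l ∈ L, copyGadget r p q l t} : Finset _) := by
  intro t ht
  simp only [mem_filter, mem_univ, true_and]
  rcases mem_union.1 ht with ht | ht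
  · obtain ⟨x, hx, rfl⟩ := mem_map.1 ht
    rcases mem_union.1 hx with hx | hx
    · obtain ⟨hU, hr⟩ := (mem_filter.1 hx).2
      obtain ⟨s, hs, hsx⟩ := mem_image.1 hU
      exact ⟨.inl s, mem_toLeft.1 hs, hsx.symm, hr⟩
    · exact ⟨.inr x, mem_toRight.1 hx, rfl⟩
  · obtain ⟨⟨b, k⟩, hb, rfl⟩ := mem_map.1 ht
    obtain ⟨x, hx, rfl⟩ := mem_image.1 (mem_sigma.1 hb).1
    obtain ⟨hxX, hr⟩ := mem_filter.1 hx
    exact ⟨.inr x, mem_toRight.1 hxX, rfl, hr⟩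

lemma card_le_card_copyGadget_image
    (hcut : ∀ (A : Finset α) (B : Finset β),
      ∑ a ∈ A, p a ≤ ∑ b ∈ B, q b + #{x : α × β | x.1 ∈ A ∧ x.2 ∉ B ∧ r x.1 x.2}) :
    #L ≤ #{t | ∃ l ∈ L, copyGadget r p q l t} := by
  set U := L.toLeft.image Sigma.fst
  set X := L.toRight
  set W := {x ∈ X | r x.1 x.2}.image Prod.snd
  set EU : Finset (α × β) := {x | x.1 ∈ U ∧ r x.1 x.2}
  have hP : #L.toLeft ≤ ∑ a ∈ U, p a :=
    calc #L.toLeft ≤ #(U.sigma fun a => (univ : Finset (Fin (p a)))) :=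
          card_le_card fun s hs => mem_sigma.2 ⟨mem_image_of_mem _ hs, mem_univ _⟩
      _ = ∑ a ∈ U, p a := by simp
  have hsplit : #EU = #{x : α × β | x.1 ∈ U ∧ x.2 ∈ W ∧ r x.1 x.2}
      + #{x : α × β | x.1 ∈ U ∧ x.2 ∉ W ∧ r x.1 x.2} := by
    rw [← card_filter_add_card_filter_not (s := EU) (fun x : α × β => x.2 ∈ W)]
    simp only [EU, filter_filter]
    congr 2 <;> ext x <;> simp only [mem_filter, mem_univ, true_and] <;> tauto
  have hXEU : #(X ∩ EU) ≤ #{x : α × β | x.1 ∈ U ∧ x.2 ∈ W ∧ r x.1 x.2} :=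
    card_le_card fun x hx => by
      obtain ⟨hxX, hxEU⟩ := mem_inter.1 hx
      obtain ⟨hU, hr⟩ := (mem_filter.1 hxEU).2
      exact mem_filter.2 ⟨mem_univ _, hU, mem_image_of_mem _ (mem_filter.2 ⟨hxX, hr⟩), hr⟩
  have hdisj : Disjoint ((EU ∪ X).map (Function.Embedding.inl (β := Σ b, Fin (q b))))
      ((W.sigma fun b => (univ : Finset (Fin (q b)))).map Function.Embedding.inr) :=
    disjoint_left.2 fun t h1 h2 => by
      obtain ⟨x, -, rfl⟩ := mem_map.1 h1
      obtain ⟨s, -, hs⟩ := mem_map.1 h2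
      exact Sum.inr_ne_inl hs
  calc #L = #L.toLeft + #X := card_toLeft_add_card_toRight.symm
    _ ≤ #(EU ∪ X) + ∑ b ∈ W, q b := by
        have hunion := card_union_add_card_inter EU X
        rw [inter_comm] at hunion
        have := hcut U W
        omega
    _ = #((EU ∪ X).map .inl ∪ (W.sigma fun b => univ).map .inr) := by
        rw [card_union_of_disjoint hdisj]; simp
    _ ≤ _ := card_le_card (subset_copyGadget_image L)

end Bipartite

section Matching

variable {α β : Type*} {r : α → β → Prop} {p : α → ℕ} {q : β → ℕ}
  {F : (Σ a, Fin (p a)) ⊕ (α × β) → (α × β) ⊕ (Σ b, Fin (q b))}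

lemma rel_of_copyGadget_ne (hF : ∀ l, copyGadget r p q l (F l)) {x : α × β}
    (hx : F (.inr x) ≠ .inl x) : r x.1 x.2 := by
  have hx' := hF (.inr x)
  rcases hFx : F (.inr x) with y | t <;> rw [hFx] at hx' hx
  · exact absurd (congrArg Sum.inl hx') hx
  · exact hx'.2

lemma card_out_copyGadget [Fintype β] [DecidableEq α] [DecidableEq β] (hFb : F.Bijective)
    (hF : ∀ l, copyGadget r p q l (F l)) (a : α) :
    #{b | F (.inr (a, b)) ≠ .inl (a, b)} = p a := by
  have himage : (univ : Finset (Fin (p a))).image (fun k => F (.inl ⟨a, k⟩)) =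
      ({b | F (.inr (a, b)) ≠ .inl (a, b)} : Finset β).image
        (fun b => (.inl (a, b) : (α × β) ⊕ (Σ b, Fin (q b)))) := by
    ext t
    simp only [mem_image, mem_univ, true_and, mem_filter]
    constructor
    · rintro ⟨k, rfl⟩
      have hk := hF (.inl ⟨a, k⟩)
      rcases hFk : F (.inl ⟨a, k⟩) with ⟨a', b⟩ | t <;> rw [hFk] at hk
      · obtain ⟨rfl, -⟩ := hk
        exact ⟨b, fun h => Sum.inr_ne_inl (hFb.1 (h.trans hFk.symm)), rfl⟩
      · exact hk.elim
    · rintro ⟨b, hb, rfl⟩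
      obtain ⟨l, hl⟩ := hFb.2 (.inl (a, b))
      have hl' := hF l
      rw [hl] at hl'
      rcases l with ⟨a', k⟩ | x
      · obtain ⟨rfl, -⟩ := hl'
        exact ⟨k, hl⟩
      · subst hl'
        exact absurd hl hb
  rw [← card_image_of_injective (f := fun b => (.inl (a, b) : (α × β) ⊕ (Σ b, Fin (q b))))
      _ (Sum.inl_injective.comp (Prod.mk_right_injective a)), ← himage,
    card_image_of_injective (f := fun k => F (.inl ⟨a, k⟩))
      _ (hFb.1.comp (Sum.inl_injective.comp sigma_mk_injective))]
  simp

lemma card_in_copyGadget [Fintype α] [DecidableEq α] [DecidableEq β] (hFb : F.Bijective)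
    (hF : ∀ l, copyGadget r p q l (F l)) (b : β) :
    #{a | F (.inr (a, b)) ≠ .inl (a, b)} = q b := by
  have himage :
      ({a | F (.inr (a, b)) ≠ .inl (a, b)} : Finset α).image (fun a => F (.inr (a, b))) =
      (univ : Finset (Fin (q b))).image (fun k => .inr ⟨b, k⟩) := by
    ext t
    simp only [mem_image, mem_univ, true_and, mem_filter]
    constructor
    · rintro ⟨a, ha, rfl⟩
      have ha' := hF (.inr (a, b))
      rcases hFa : F (.inr (a, b)) with x | ⟨b', k⟩ <;> rw [hFa] at ha' ha
      · exact absurd (congrArg Sum.inl ha') ha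
      · obtain ⟨rfl, -⟩ := ha'
        exact ⟨k, rfl⟩
    · rintro ⟨k, rfl⟩
      obtain ⟨l, hl⟩ := hFb.2 (.inr ⟨b, k⟩)
      have hl' := hF l
      rw [hl] at hl'
      rcases l with s | ⟨a, b'⟩
      · exact hl'.elim
      · obtain ⟨rfl, -⟩ := hl'
        exact ⟨a, by rw [hl]; exact Sum.inr_ne_inl, hl⟩
  rw [← card_image_of_injective (f := fun a => F (.inr (a, b)))
      _ (hFb.1.comp (Sum.inr_injective.comp (Prod.mk_left_injective b))), himage,
    card_image_of_injective (f := fun k => (.inr ⟨b, k⟩ : (α × β) ⊕ (Σ b, Fin (q b))))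
      _ (Sum.inr_injective.comp sigma_mk_injective)]
  simp

end Matching

theorem exists_bipartite_factor_of_cut {α β : Type*} [Fintype α] [Fintype β] [DecidableEq α]
    [DecidableEq β] {r : α → β → Prop} [DecidableRel r] {p : α → ℕ} {q : β → ℕ}
    (hsum : ∑ a, p a = ∑ b, q b)
    (hcut : ∀ (A : Finset α) (B : Finset β),
      ∑ a ∈ A, p a ≤ ∑ b ∈ B, q b + #{x : α × β | x.1 ∈ A ∧ x.2 ∉ B ∧ r x.1 x.2}) :
    ∃ D : Finset (α × β), (∀ x ∈ D, r x.1 x.2) ∧ (∀ a, #{b | (a, b) ∈ D} = p a) ∧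
      ∀ b, #{a | (a, b) ∈ D} = q b := by
  classical
  obtain ⟨F, hFi, hF⟩ := (Fintype.all_card_le_filter_rel_iff_exists_injective
    (copyGadget r p q)).1 (card_le_card_copyGadget_image · hcut)
  have hFb : F.Bijective := (Fintype.bijective_iff_injective_and_card F).2
    ⟨hFi, by simp [Fintype.card_sigma, hsum, add_comm]⟩
  refine ⟨({x | F (.inr x) ≠ .inl x} : Finset (α × β)),
    fun x hx => rel_of_copyGadget_ne hF (mem_filter.1 hx).2, fun a => ?_, fun b => ?_⟩
  · simpa only [mem_filter, mem_univ, true_and] using card_out_copyGadget hFb hF a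
  · simpa only [mem_filter, mem_univ, true_and] using card_in_copyGadget hFb hF b

lemma SimpleGraph.sum_incidenceFinset_eq_sum_neighborFinset {V M : Type*} [DecidableEq V]
    [AddCommMonoid M] (G : SimpleGraph V) (x : V) [Fintype (G.neighborSet x)] (φ : Sym2 V → M) :
    ∑ e ∈ G.incidenceFinset x, φ e = ∑ w ∈ G.neighborFinset x, φ s(x, w) := by
  have himage : G.incidenceFinset x = (G.neighborFinset x).image (s(x, ·)) := by
    ext e
    induction e using Sym2.ind with
    | _ a b =>
      simp only [SimpleGraph.mem_incidenceFinset, SimpleGraph.mk'_mem_incidenceSet_iff, mem_image,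
        SimpleGraph.mem_neighborFinset, Sym2.eq_iff]
      constructor
      · rintro ⟨hab, rfl | rfl⟩
        · exact ⟨b, hab, Or.inl ⟨rfl, rfl⟩⟩
        · exact ⟨a, hab.symm, Or.inr ⟨rfl, rfl⟩⟩
      · rintro ⟨w, hw, ⟨rfl, rfl⟩ | ⟨rfl, rfl⟩⟩
        · exact ⟨hw, Or.inl rfl⟩
        · exact ⟨hw.symm, Or.inr rfl⟩
  rw [himage, sum_image fun _ _ _ _ h => Sym2.congr_right.1 h]

section Graph

variable {V : Type*} [Fintype V] [DecidableEq V] (G : SimpleGraph V) [DecidableRel G.Adj]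

lemma sum_sum_neighborFinset_inter_comm {M : Type*} [AddCommMonoid M] (φ : V → V → M)
    (X Y : Finset V) :
    ∑ u ∈ X, ∑ w ∈ G.neighborFinset u ∩ Y, φ u w =
      ∑ w ∈ Y, ∑ u ∈ G.neighborFinset w ∩ X, φ u w :=
  sum_comm' fun u w => by simp only [mem_inter, SimpleGraph.mem_neighborFinset, G.adj_comm]; tauto

lemma dOut_sdiff {B W : Finset V} (hBW : B ⊆ W) (v : V) :
    dOut G (W \ B) v = dOut G W v + #(G.neighborFinset v ∩ B) := by
  rw [dOut, dOut, sdiff_sdiff_right', sup_eq_union, inf_eq_inter]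
  exact card_union_of_disjoint (disjoint_left.2 fun w hw hw' =>
    (mem_sdiff.1 hw).2 (hBW (mem_inter.1 hw').2))

lemma card_filter_adj_eq_sum_dOut (A B : Finset V) :
    #{x : V × V | x.1 ∈ A ∧ x.2 ∉ B ∧ G.Adj x.1 x.2} = ∑ a ∈ A, dOut G B a := by
  rw [card_eq_sum_card_fiberwise (f := Prod.fst) (t := A) fun x hx => (mem_filter.1 hx).2.1]
  refine sum_congr rfl fun a ha => ?_
  refine (congrArg card ?_).trans (card_map ⟨Prod.mk a, Prod.mk_right_injective a⟩)
  ext ⟨u, w⟩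
  simp only [mem_filter, mem_univ, true_and, mem_map, mem_sdiff, SimpleGraph.mem_neighborFinset,
    Function.Embedding.coeFn_mk, Prod.mk.injEq]
  constructor
  · rintro ⟨⟨-, hw, hadj⟩, rfl⟩
    exact ⟨w, ⟨hadj, hw⟩, rfl, rfl⟩
  · rintro ⟨w, ⟨hadj, hw⟩, rfl, rfl⟩
    exact ⟨⟨ha, hw, hadj⟩, rfl⟩

def CutCondition (q : V → ℕ) : Prop :=
  ∀ U W : Finset V, ∑ v ∈ U, q v ≤ ∑ v ∈ W, q v + ∑ v ∈ U, dOut G W v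

variable {G}

lemma IsFracFactor.sum_le {a b : V → ℕ} {h : Sym2 V → ℝ} (hh : IsFracFactor G a b h)
    (U W : Finset V) : ∑ v ∈ U, a v ≤ ∑ v ∈ W, b v + ∑ v ∈ U, dOut G W v := by
  obtain ⟨hedge, hdeg⟩ := hh
  have hbound : ∀ u w, G.Adj u w → 0 ≤ h s(u, w) ∧ h s(u, w) ≤ 1 := fun u w huw =>
    hedge _ (G.mem_edgeFinset.2 huw)
  have hsum := G.sum_incidenceFinset_eq_sum_neighborFinset (φ := h)
  suffices ∑ v ∈ U, (a v : ℝ) ≤ ∑ v ∈ W, (b v : ℝ) + ∑ v ∈ U, (dOut G W v : ℝ) by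
    exact_mod_cast this
  calc ∑ v ∈ U, (a v : ℝ)
      ≤ ∑ u ∈ U, ∑ w ∈ G.neighborFinset u, h s(u, w) :=
        sum_le_sum fun u _ => hsum u ▸ (hdeg u).1
    _ = ∑ u ∈ U, ∑ w ∈ G.neighborFinset u ∩ W, h s(u, w) +
          ∑ u ∈ U, ∑ w ∈ G.neighborFinset u \ W, h s(u, w) := by
        rw [← sum_add_distrib]
        simp only [sum_inter_add_sum_sdiff]
    _ = ∑ w ∈ W, ∑ u ∈ G.neighborFinset w ∩ U, h s(w, u) +
          ∑ u ∈ U, ∑ w ∈ G.neighborFinset u \ W, h s(u, w) := by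
        rw [sum_sum_neighborFinset_inter_comm]
        simp only [Sym2.eq_swap]
    _ ≤ ∑ w ∈ W, (b w : ℝ) + ∑ u ∈ U, (dOut G W u : ℝ) := by
        gcongr with w _ u _
        · calc ∑ u ∈ G.neighborFinset w ∩ U, h s(w, u)
              ≤ ∑ u ∈ G.neighborFinset w, h s(w, u) :=
                sum_le_sum_of_subset_of_nonneg inter_subset_left fun u hu _ =>
                  (hbound w u ((G.mem_neighborFinset w u).1 hu)).1
            _ ≤ b w := hsum w ▸ (hdeg w).2
        · simpa [dOut] using sum_le_card_nsmul _ _ 1 fun w hw =>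
            (hbound u w ((G.mem_neighborFinset u w).1 (mem_sdiff.1 hw).1)).2

lemma exists_isFracFactor_of_cutCondition {q : V → ℕ} (hcut : CutCondition G q) :
    ∃ h, IsFracFactor G q q h := by
  obtain ⟨D, hDadj, hout, hin⟩ := exists_bipartite_factor_of_cut (r := G.Adj) (p := q) (q := q)
    rfl fun A B => card_filter_adj_eq_sum_dOut G A B ▸ hcut A B
  let φ : V → V → ℝ := fun a b =>
    ((if (a, b) ∈ D then 1 else 0) + (if (b, a) ∈ D then 1 else 0)) / 2
  have hdeg : ∀ x, ∑ w ∈ G.neighborFinset x, φ x w = q x := by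
    intro x
    have hout' : {w ∈ G.neighborFinset x | (x, w) ∈ D} = ({w | (x, w) ∈ D} : Finset V) := by
      ext w
      simpa [SimpleGraph.mem_neighborFinset] using fun h => hDadj _ h
    have hin' : {w ∈ G.neighborFinset x | (w, x) ∈ D} = ({w | (w, x) ∈ D} : Finset V) := by
      ext w
      simpa [SimpleGraph.mem_neighborFinset] using fun h => (hDadj _ h).symm
    rw [← sum_div, sum_add_distrib, sum_boole, sum_boole, hout', hin', hout, hin]
    ring
  refine ⟨Sym2.lift ⟨φ, fun a b => by simp only [φ, add_comm]⟩, fun e _ => ?_, fun x => ?_⟩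
  · induction e using Sym2.ind with
    | _ a b =>
      simp only [Sym2.lift_mk, φ]
      constructor <;> split_ifs <;> norm_num
  · simp only [G.sum_incidenceFinset_eq_sum_neighborFinset, Sym2.lift_mk, hdeg x, le_refl,
      and_self]

end Graph

section Deficiency

variable {V : Type*} [Fintype V] [DecidableEq V] {G : SimpleGraph V} [DecidableRel G.Adj]
  {q : V → ℕ}

/- Natural subtraction is intended here: `q v - dOut G S v` is the positive part of the
deficiency of `v`. -/
lemma sum_tsub_dOut_le_of_forall_compl
    (hA : ∀ S : Finset V, ∑ v ∈ Sᶜ, (q v - dOut G S v) ≤ ∑ v ∈ S, q v) (W : Finset V) :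
    ∑ v, (q v - dOut G W v) ≤ ∑ v ∈ W, q v := by
  set B := {v ∈ W | dOut G W v < q v}
  set S := W \ B
  have hBW : B ⊆ W := filter_subset _ _
  have hW : ∑ v ∈ W, (q v - dOut G W v) = ∑ v ∈ B, (q v - dOut G W v) :=
    (sum_filter_of_ne fun v _ h => by omega).symm
  have hWc : ∑ v ∈ Wᶜ, (q v - dOut G W v) ≤ ∑ v ∈ Sᶜ, (q v - dOut G S v) + ∑ b ∈ B, dOut G W b :=
    calc ∑ v ∈ Wᶜ, (q v - dOut G W v)
        ≤ ∑ v ∈ Wᶜ, ((q v - dOut G S v) + #(G.neighborFinset v ∩ B)) :=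
          sum_le_sum fun v _ => by rw [dOut_sdiff G hBW]; omega
      _ = ∑ v ∈ Wᶜ, (q v - dOut G S v) + ∑ b ∈ B, #(G.neighborFinset b ∩ Wᶜ) := by
          simp only [sum_add_distrib, card_eq_sum_ones]
          rw [sum_sum_neighborFinset_inter_comm G (fun _ _ => 1)]
      _ ≤ ∑ v ∈ Sᶜ, (q v - dOut G S v) + ∑ b ∈ B, dOut G W b := by
          simp only [dOut, sdiff_eq_inter_compl]
          gcongr
          exact sdiff_subset
  have hB : ∑ b ∈ B, dOut G W b + ∑ b ∈ B, (q b - dOut G W b) = ∑ b ∈ B, q b := by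
    rw [← sum_add_distrib]
    exact sum_congr rfl fun b hb => by have := (mem_filter.1 hb).2; omega
  calc ∑ v, (q v - dOut G W v)
      = ∑ v ∈ Wᶜ, (q v - dOut G W v) + ∑ v ∈ W, (q v - dOut G W v) := (sum_compl_add_sum W _).symm
    _ ≤ ∑ v ∈ Sᶜ, (q v - dOut G S v) + ∑ b ∈ B, dOut G W b + ∑ b ∈ B, (q b - dOut G W b) := by
        rw [hW]; gcongr
    _ ≤ ∑ v ∈ S, q v + ∑ b ∈ B, q b := by rw [add_assoc, hB]; gcongr; exact hA S
    _ = ∑ v ∈ W, q v := sum_sdiff hBW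

lemma cutCondition_of_forall_compl
    (hA : ∀ S : Finset V, ∑ v ∈ Sᶜ, (q v - dOut G S v) ≤ ∑ v ∈ S, q v) : CutCondition G q :=
  fun U W => calc ∑ v ∈ U, q v
      ≤ ∑ v ∈ U, ((q v - dOut G W v) + dOut G W v) := sum_le_sum fun v _ => le_tsub_add
    _ = ∑ v ∈ U, (q v - dOut G W v) + ∑ v ∈ U, dOut G W v := sum_add_distrib
    _ ≤ ∑ v, (q v - dOut G W v) + ∑ v ∈ U, dOut G W v := by gcongr; exact subset_univ U
    _ ≤ ∑ v ∈ W, q v + ∑ v ∈ U, dOut G W v := by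
        gcongr; exact sum_tsub_dOut_le_of_forall_compl hA W

lemma sum_compl_tsub_dOut_le_sum_tset {f : V → ℕ} (hqf : ∀ v, q v ≤ f v) (S : Finset V) :
    ∑ v ∈ Sᶜ, (q v - dOut G S v) ≤ ∑ v ∈ Tset G f S, (f v - dOut G S v) :=
  calc ∑ v ∈ Sᶜ, (q v - dOut G S v) ≤ ∑ v ∈ Sᶜ, (f v - dOut G S v) := by
        gcongr with v; exact hqf v
    _ = ∑ v ∈ Tset G f S, (f v - dOut G S v) := (sum_filter_of_ne fun v _ h => by omega).symm

end Deficiency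

/-- **Theorem 5 (Lu).** `G` has all fractional `(g,f)`-factors iff for every `S ⊆ V(G)`,
`g(S) − f(T) + Σ_{x∈T} d_{G−S}(x) ≥ 0`, where `T = {v ∈ V(G)−S : d_{G−S}(v) < f v}`. -/
theorem all_fractional_gf_factors_iff {V : Type*} [Fintype V] [DecidableEq V]
    (G : SimpleGraph V) [DecidableRel G.Adj] (g f : V → ℕ) (hgf : ∀ x, g x ≤ f x) :
    HasAllFracFactors G g f ↔
      ∀ S : Finset V,
        0 ≤ (∑ v ∈ S, (g v : ℤ)) - (∑ v ∈ Tset G f S, (f v : ℤ)) +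
            ∑ v ∈ Tset G f S, (dOut G S v : ℤ) := by
  refine ⟨fun hAll S => ?_, fun hcond q hgq hqf => ?_⟩
  · obtain ⟨h, hh⟩ := hAll (S.piecewise g f)
      (fun v => by by_cases hv : v ∈ S <;> simp [hv, hgf])
      (fun v => by by_cases hv : v ∈ S <;> simp [hv, hgf])
    have hcut := hh.sum_le (Tset G f S) S
    have hT : ∑ v ∈ Tset G f S, S.piecewise g f v = ∑ v ∈ Tset G f S, f v :=
      sum_congr rfl fun v hv => S.piecewise_eq_of_notMem _ _ (mem_compl.1 (mem_filter.1 hv).1)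
    have hS : ∑ v ∈ S, S.piecewise g f v = ∑ v ∈ S, g v :=
      sum_congr rfl fun v hv => S.piecewise_eq_of_mem _ _ hv
    rw [hT, hS] at hcut
    zify at hcut
    linarith
  · refine exists_isFracFactor_of_cutCondition (cutCondition_of_forall_compl fun S => ?_)
    have hT : ∑ v ∈ Tset G f S, ((f v - dOut G S v : ℕ) : ℤ) =
        ∑ v ∈ Tset G f S, (f v : ℤ) - ∑ v ∈ Tset G f S, (dOut G S v : ℤ) := by
      rw [← sum_sub_distrib]
      exact sum_congr rfl fun v hv => Nat.cast_sub (mem_filter.1 hv).2.le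
    have hgS : ∑ v ∈ S, g v ≤ ∑ v ∈ S, q v := sum_le_sum fun v _ => hgq v
    have hdef := sum_compl_tsub_dOut_le_sum_tset (G := G) hqf S
    have hS := hcond S
    zify at hdef hgS ⊢
    linarith
end

section
/- Let G be a finite simple graph and let g, f : V(G) → ℕ be functions with g(x) ≤ f(x) for all x ∈ V(G). Suppose that for every subset S ⊆ V(G), one has g(S) − f(T) + Σ_{x∈T} d_{G−S}(x) ≥ 0, where T = {v ∈ V(G) − S : d_{G−S}(v) < f(v)}. Then for every function q : V(G) → ℕ with g(v) ≤ q(v) ≤ f(v) for all v, the graph G has a fractional q-factor. -/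
open Finset

/-!
Fix `q` with `g ≤ q ≤ f`. For disjoint `U` and `S` the hypothesis gives
`q(U) ≤ q(S) + Σ_{x ∈ U} d_{G−S}(x)`; taking `U = A \ B`, `S = B \ A` and reversing the darts from
`A \ B` into `A ∩ B`, this becomes the cut condition `q(A) ≤ q(B) + #{darts from A to V \ B}`
for all `A, B ⊆ V`. By Hall's theorem on slots and darts, the cut condition yields a set `M` of
darts with out- and in-degree `q` at every vertex, i.e. a `q`-factor of the bipartite double
cover; giving each edge half the number of its darts in `M` is then a fractional `q`-factor.
-/

namespace SimpleGraph

section Crossing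

variable {V : Type*} [Fintype V] [DecidableEq V] (G : SimpleGraph V) [DecidableRel G.Adj]

def crossingDarts (A B : Finset V) : Finset G.Dart := {d | d.fst ∈ A ∧ d.snd ∉ B}

variable {G} in
@[simp]
lemma mem_crossingDarts {A B : Finset V} {d : G.Dart} :
    d ∈ G.crossingDarts A B ↔ d.fst ∈ A ∧ d.snd ∉ B := by
  simp [crossingDarts]

lemma sum_dOut_eq_card_crossingDarts (C S : Finset V) :
    ∑ v ∈ C, dOut G S v = #(G.crossingDarts C S) := by
  rw [card_eq_sum_card_fiberwise (f := fun d : G.Dart => d.fst) (t := C)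
    fun d hd => (mem_crossingDarts.1 hd).1]
  refine sum_congr rfl fun v _ => (card_bij (fun d _ => d.snd) ?_ ?_ ?_).symm
  · intro d hd
    simp only [mem_filter, mem_crossingDarts] at hd
    simp [← hd.2, hd.1.2, d.adj]
  · intro d₁ hd₁ d₂ hd₂ h
    simp only [mem_filter] at hd₁ hd₂
    exact Dart.ext _ _ (Prod.ext (hd₁.2.trans hd₂.2.symm) h)
  · intro w hw
    simp only [mem_sdiff, mem_neighborFinset] at hw
    exact ⟨⟨(v, w), hw.1⟩, by simp_all, rfl⟩

lemma card_crossingDarts_sdiff_le (A B : Finset V) :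
    #(G.crossingDarts (A \ B) (B \ A)) ≤ #(G.crossingDarts A B) := by
  -- reversed, a dart from `A \ B` into `A ∩ B` leaves `B` from `A`
  refine card_le_card_of_injOn (fun d => if d.snd ∈ B then d.symm else d)
    (fun d hd => ?_) (fun d₁ hd₁ d₂ hd₂ h => ?_)
  · simp only [mem_coe, mem_crossingDarts, mem_sdiff] at hd ⊢
    split_ifs <;> simp_all
  · simp only [mem_coe, mem_crossingDarts, mem_sdiff] at hd₁ hd₂
    dsimp only at h
    split_ifs at h with h₁ h₂ h₂
    · exact Dart.symm_involutive.injective h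
    · subst h
      simp_all [Dart.symm]
    · subst h
      simp_all [Dart.symm]
    · exact h

variable {G}

lemma sum_tsub_dOut_le_of_condition {g f : V → ℕ} {S : Finset V}
    (hS : 0 ≤ (∑ v ∈ S, (g v : ℤ)) - (∑ v ∈ Tset G f S, (f v : ℤ)) +
      ∑ v ∈ Tset G f S, (dOut G S v : ℤ)) :
    ∑ v ∈ Sᶜ, (f v - dOut G S v) ≤ ∑ v ∈ S, g v := by
  have hT : ((∑ v ∈ Sᶜ, (f v - dOut G S v) : ℕ) : ℤ) =
      ∑ v ∈ Tset G f S, ((f v : ℤ) - dOut G S v) := by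
    rw [← sum_filter_of_ne (p := fun v => dOut G S v < f v) fun v _ h => by omega]
    push_cast
    exact sum_congr rfl fun v hv => by rw [Nat.cast_sub (mem_filter.1 hv).2.le]
  rw [sum_sub_distrib] at hT
  have : ((∑ v ∈ Sᶜ, (f v - dOut G S v) : ℕ) : ℤ) ≤ ∑ v ∈ S, (g v : ℤ) := by linarith
  exact_mod_cast this

lemma sum_le_sum_add_sum_dOut {g f q : V → ℕ} (hgq : ∀ v, g v ≤ q v) (hqf : ∀ v, q v ≤ f v)
    {S U : Finset V} (hS : 0 ≤ (∑ v ∈ S, (g v : ℤ)) - (∑ v ∈ Tset G f S, (f v : ℤ)) +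
      ∑ v ∈ Tset G f S, (dOut G S v : ℤ)) (hUS : Disjoint U S) :
    ∑ v ∈ U, q v ≤ ∑ v ∈ S, q v + ∑ v ∈ U, dOut G S v :=
  calc ∑ v ∈ U, q v
      ≤ ∑ v ∈ U, (dOut G S v + (f v - dOut G S v)) :=
        sum_le_sum fun v _ => by have := hqf v; omega
    _ = ∑ v ∈ U, dOut G S v + ∑ v ∈ U, (f v - dOut G S v) := sum_add_distrib
    _ ≤ ∑ v ∈ U, dOut G S v + ∑ v ∈ Sᶜ, (f v - dOut G S v) := by
        gcongr
        exact subset_compl_iff_disjoint_right.2 hUS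
    _ ≤ ∑ v ∈ U, dOut G S v + ∑ v ∈ S, q v := by
        grw [sum_tsub_dOut_le_of_condition hS, sum_le_sum fun v _ => hgq v]
    _ = ∑ v ∈ S, q v + ∑ v ∈ U, dOut G S v := add_comm _ _

lemma sum_le_sum_add_card_crossingDarts {g f q : V → ℕ} (hgq : ∀ v, g v ≤ q v)
    (hqf : ∀ v, q v ≤ f v)
    (hcond : ∀ S : Finset V,
      0 ≤ (∑ v ∈ S, (g v : ℤ)) - (∑ v ∈ Tset G f S, (f v : ℤ)) +
        ∑ v ∈ Tset G f S, (dOut G S v : ℤ))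
    (A B : Finset V) :
    ∑ v ∈ A, q v ≤ ∑ v ∈ B, q v + #(G.crossingDarts A B) := by
  have h := sum_le_sum_add_sum_dOut hgq hqf (hcond (B \ A)) (U := A \ B) disjoint_sdiff_sdiff
  rw [sum_dOut_eq_card_crossingDarts] at h
  have hA := sum_inter_add_sum_sdiff A B q
  have hB := sum_inter_add_sum_sdiff B A q
  have := G.card_crossingDarts_sdiff_le A B
  rw [inter_comm] at hB
  omega

end Crossing

section Slots

variable {V : Type*} (G : SimpleGraph V) (q : V → ℕ)

/-- Every vertex `v` carries `q v` slots. A slot at `u` is related to the darts leaving `u`, a dart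
to itself and to the slots at its head. For an injective `φ` with `SlotDartRel x (φ x)`, the darts
with `φ d ≠ d` are exactly the images of slots, so they have out- and in-degree `q`. -/
def SlotDartRel : (Σ v, Fin (q v)) ⊕ G.Dart → (Σ v, Fin (q v)) ⊕ G.Dart → Prop
  | .inl σ, .inr d => d.fst = σ.1
  | .inl _, .inl _ => False
  | .inr d, .inr d' => d' = d
  | .inr d, .inl τ => τ.1 = d.snd

instance [DecidableEq V] : DecidableRel (G.SlotDartRel q)
  | .inl σ, .inr d => inferInstanceAs (Decidable (d.fst = σ.1))
  | .inl _, .inl _ => inferInstanceAs (Decidable False)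
  | .inr d, .inr d' => inferInstanceAs (Decidable (d' = d))
  | .inr d, .inl τ => inferInstanceAs (Decidable (τ.1 = d.snd))

def slotsAt (v : V) : Finset ((Σ v, Fin (q v)) ⊕ G.Dart) :=
  univ.map ((Function.Embedding.sigmaMk v).trans .inl)

lemma card_slotsAt (v : V) : #(G.slotsAt q v) = q v := by
  simp [slotsAt]

lemma mem_slotsAt {v : V} {y : (Σ v, Fin (q v)) ⊕ G.Dart} :
    y ∈ G.slotsAt q v ↔ ∃ i, .inl ⟨v, i⟩ = y := by
  simp [slotsAt]

variable {G q} [Fintype V] [DecidableEq V] [DecidableRel G.Adj]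

lemma card_le_card_slotDartRel_image
    (hcut : ∀ A B : Finset V, ∑ v ∈ A, q v ≤ ∑ v ∈ B, q v + #(G.crossingDarts A B))
    (s : Finset ((Σ v, Fin (q v)) ⊕ G.Dart)) :
    #s ≤ #{y | ∃ x ∈ s, G.SlotDartRel q x y} := by
  set U := s.toLeft.image Sigma.fst
  set W := s.toRight.image fun d => d.snd
  have hsub : (W.sigma fun v => (univ : Finset (Fin (q v)))).disjSum
      (G.crossingDarts U W ∪ s.toRight) ⊆
        ({y | ∃ x ∈ s, G.SlotDartRel q x y} : Finset _) := by
    rintro (⟨w, i⟩ | d) h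
    · obtain ⟨d, hd, rfl⟩ : ∃ d ∈ s.toRight, d.snd = w := by simpa [W] using h
      exact mem_filter.2 ⟨mem_univ _, .inr d, mem_toRight.1 hd, rfl⟩
    · simp only [inr_mem_disjSum, mem_union, mem_crossingDarts] at h
      refine mem_filter.2 ⟨mem_univ _, ?_⟩
      rcases h with ⟨hdU, -⟩ | hd
      · obtain ⟨σ, hσ, hσd⟩ := mem_image.1 hdU
        exact ⟨.inl σ, mem_toLeft.1 hσ, hσd.symm⟩
      · exact ⟨.inr d, mem_toRight.1 hd, rfl⟩
  have hdisj : Disjoint (G.crossingDarts U W) s.toRight :=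
    Finset.disjoint_left.2 fun _ hd hds =>
      (mem_crossingDarts.1 hd).2 (mem_image_of_mem (fun d : G.Dart => d.snd) hds)
  calc #s = #s.toLeft + #s.toRight := card_toLeft_add_card_toRight.symm
    _ ≤ #(U.sigma fun v => (univ : Finset (Fin (q v)))) + #s.toRight := by
        gcongr
        exact fun σ hσ => mem_sigma.2 ⟨mem_image_of_mem _ hσ, mem_univ _⟩
    _ ≤ ∑ v ∈ W, q v + #(G.crossingDarts U W) + #s.toRight := by
        simpa [card_sigma] using hcut U W
    _ = #((W.sigma fun v => (univ : Finset (Fin (q v)))).disjSum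
          (G.crossingDarts U W ∪ s.toRight)) := by
        simp [card_disjSum, card_union_of_disjoint hdisj, card_sigma, add_assoc]
    _ ≤ _ := card_le_card hsub

def usedDarts (φ : (Σ v, Fin (q v)) ⊕ G.Dart → (Σ v, Fin (q v)) ⊕ G.Dart) : Finset G.Dart :=
  {d | φ (.inr d) ≠ .inr d}

variable {φ : (Σ v, Fin (q v)) ⊕ G.Dart → (Σ v, Fin (q v)) ⊕ G.Dart}

lemma map_inr_filter_usedDarts_fst_eq (hφ : Function.Injective φ)
    (hrel : ∀ x, G.SlotDartRel q x (φ x)) (u : V) :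
    {d ∈ usedDarts φ | d.fst = u}.map .inr = (G.slotsAt q u).image φ := by
  ext y
  simp only [mem_map, mem_filter, mem_image, mem_slotsAt, usedDarts, mem_univ, true_and]
  constructor
  · rintro ⟨d, ⟨hd, rfl⟩, rfl⟩
    obtain ⟨⟨w, i⟩ | d', hx⟩ := (Finite.injective_iff_surjective.1 hφ) (.inr d)
    · have : d.fst = w := by simpa [hx, SlotDartRel] using hrel (.inl ⟨w, i⟩)
      subst this
      exact ⟨_, ⟨i, rfl⟩, hx⟩
    · have := hrel (.inr d')
      rw [hx] at this
      subst this
      exact absurd hx hd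
  · rintro ⟨_, ⟨i, rfl⟩, rfl⟩
    have := hrel (.inl ⟨u, i⟩)
    rcases h : φ (.inl ⟨u, i⟩) with τ | d
    · rw [h] at this
      exact this.elim
    · rw [h] at this
      refine ⟨d, ⟨fun hd => ?_, this⟩, rfl⟩
      simpa using hφ (hd.trans h.symm)

lemma image_map_inr_filter_usedDarts_snd_eq (hφ : Function.Injective φ)
    (hrel : ∀ x, G.SlotDartRel q x (φ x)) (v : V) :
    ({d ∈ usedDarts φ | d.snd = v}.map .inr).image φ = G.slotsAt q v := by
  ext y
  simp only [mem_map, mem_filter, mem_image, mem_slotsAt, usedDarts, mem_univ, true_and]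
  constructor
  · rintro ⟨_, ⟨d, ⟨hd, rfl⟩, rfl⟩, rfl⟩
    have := hrel (.inr d)
    rcases h : φ (.inr d) with ⟨w, i⟩ | d'
    · rw [h] at this
      change w = d.snd at this
      subst this
      exact ⟨i, h.symm⟩
    · rw [h] at this
      exact absurd (h.trans (congrArg _ this)) hd
  · rintro ⟨i, rfl⟩
    obtain ⟨x | d, hx⟩ := (Finite.injective_iff_surjective.1 hφ) (.inl ⟨v, i⟩)
    · have := hrel (.inl x)
      rw [hx] at this
      exact this.elim
    · have := hrel (.inr d)
      rw [hx] at this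
      exact ⟨.inr d, ⟨d, ⟨by simp [hx], this.symm⟩, rfl⟩, hx⟩

lemma exists_darts_card_fst_eq_and_card_snd_eq
    (hcut : ∀ A B : Finset V, ∑ v ∈ A, q v ≤ ∑ v ∈ B, q v + #(G.crossingDarts A B)) :
    ∃ M : Finset G.Dart, ∀ v, #{d ∈ M | d.fst = v} = q v ∧ #{d ∈ M | d.snd = v} = q v := by
  obtain ⟨φ, hφ, hrel⟩ := (Fintype.all_card_le_filter_rel_iff_exists_injective _).1
    (card_le_card_slotDartRel_image hcut)
  refine ⟨usedDarts φ, fun v => ⟨?_, ?_⟩⟩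
  · rw [← card_map .inr, map_inr_filter_usedDarts_fst_eq hφ hrel, card_image_of_injective _ hφ,
      card_slotsAt]
  · rw [← card_slotsAt (G := G) q v, ← image_map_inr_filter_usedDarts_snd_eq hφ hrel,
      card_image_of_injective _ hφ, card_map]

end Slots

section FracFactor

variable {V : Type*} [Fintype V] [DecidableEq V] {G : SimpleGraph V} [DecidableRel G.Adj]

lemma Dart.edge_mem_incidenceFinset_iff {d : G.Dart} {x : V} :
    d.edge ∈ G.incidenceFinset x ↔ d.fst = x ∨ d.snd = x := by
  simp [Dart.edge, mk'_mem_incidenceSet_iff, d.adj, eq_comm]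

lemma exists_isFracFactor_of_darts {q : V → ℕ} (M : Finset G.Dart)
    (hM : ∀ v, #{d ∈ M | d.fst = v} + #{d ∈ M | d.snd = v} = 2 * q v) :
    ∃ h : Sym2 V → ℝ, IsFracFactor G q q h := by
  refine ⟨fun e => #{d ∈ M | d.edge = e} / 2, fun e he => ⟨by positivity, ?_⟩, fun x => ?_⟩
  · have : #{d ∈ M | d.edge = e} ≤ 2 :=
      (card_le_card (filter_subset_filter _ (subset_univ M))).trans
        (G.dart_edge_fiber_card e (mem_edgeFinset.1 he)).le
    rw [div_le_one two_pos]
    exact_mod_cast this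
  · have hx : #{d ∈ M | d.edge ∈ G.incidenceFinset x} = 2 * q x := by
      rw [filter_congr fun d _ => Dart.edge_mem_incidenceFinset_iff, filter_or,
        card_union_of_disjoint, hM]
      exact disjoint_filter.2 fun d _ h₁ h₂ => d.fst_ne_snd (h₁.trans h₂.symm)
    have : ∑ e ∈ G.incidenceFinset x, (#{d ∈ M | d.edge = e} : ℝ) / 2 = q x := by
      rw [← sum_div, ← Nat.cast_sum, sum_card_fiberwise_eq_card_filter, hx]
      push_cast
      ring
    exact ⟨this.ge, this.le⟩

end FracFactor

end SimpleGraph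

theorem fractional_q_factor_of_condition_general {V : Type*} [Fintype V] [DecidableEq V]
    (G : SimpleGraph V) [DecidableRel G.Adj] (g f : V → ℕ)
    (hcond : ∀ S : Finset V,
      0 ≤ (∑ v ∈ S, (g v : ℤ)) - (∑ v ∈ Tset G f S, (f v : ℤ)) +
          ∑ v ∈ Tset G f S, (dOut G S v : ℤ)) :
    ∀ q : V → ℕ, (∀ v, g v ≤ q v) → (∀ v, q v ≤ f v) →
      ∃ h : Sym2 V → ℝ, IsFracFactor G q q h := by
  intro q hgq hqf
  obtain ⟨M, hM⟩ := SimpleGraph.exists_darts_card_fst_eq_and_card_snd_eq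
    (SimpleGraph.sum_le_sum_add_card_crossingDarts hgq hqf hcond)
  exact SimpleGraph.exists_isFracFactor_of_darts M fun v => by rw [(hM v).1, (hM v).2, two_mul]

/-- Sufficiency in Theorem 5: if `g(S) − f(T) + Σ_{x∈T} d_{G−S}(x) ≥ 0` for every
`S ⊆ V(G)` (with `T = {v ∈ V(G)−S : d_{G−S}(v) < f v}`), then for every `q : V → ℕ`
with `g ≤ q ≤ f` pointwise, `G` has a fractional `q`-factor. -/
theorem fractional_q_factor_of_condition {V : Type*} [Fintype V] [DecidableEq V]
    (G : SimpleGraph V) [DecidableRel G.Adj] (g f : V → ℕ) (hgf : ∀ x, g x ≤ f x)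
    (hcond : ∀ S : Finset V,
      0 ≤ (∑ v ∈ S, (g v : ℤ)) - (∑ v ∈ Tset G f S, (f v : ℤ)) +
          ∑ v ∈ Tset G f S, (dOut G S v : ℤ)) :
    ∀ q : V → ℕ, (∀ v, g v ≤ q v) → (∀ v, q v ≤ f v) →
      ∃ h : Sym2 V → ℝ, IsFracFactor G q q h :=
  fractional_q_factor_of_condition_general G g f hcond
end

section
/- Let G be a finite simple graph and let g, f : V(G) → ℕ be functions with g(x) ≤ f(x) for all x ∈ V(G). If there exists a subset S ⊆ V(G) with g(S) − f(T) + Σ_{x∈T} d_{G−S}(x) < 0, where T = {v ∈ V(G) − S : d_{G−S}(v) < f(v)}, then G does not have all fractional (g,f)-factors; more precisely, the function h defined by h(v) = g(v) for v ∈ S and h(v) = f(v) for v ∉ S satisfies g ≤ h ≤ f and G has no fractional h-factor. -/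
/-! Suppose `w` were a fractional `h`-factor and let `T = Tset G f S`. A vertex `v ∈ T` lies
outside `S`, so it carries weight `f v`; since edges weigh at most `1`, at most `d_{G−S}(v)` of it
sits on edges avoiding `S`. Hence the edges between `T` and `S` weigh at least
`f(T) − Σ_{v∈T} d_{G−S}(v)`, while counted from `S` they weigh at most `g(S)`. -/

open Finset

namespace SimpleGraph

variable {V : Type*} [Fintype V] [DecidableEq V] {G : SimpleGraph V} [DecidableRel G.Adj]

theorem incidenceFinset_eq_image_neighborFinset (v : V) :
    G.incidenceFinset v = (G.neighborFinset v).image (s(v, ·)) := by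
  ext e
  induction e with
  | _ a b =>
    simp only [mem_incidenceFinset, mk'_mem_incidenceSet_iff, mem_image, mem_neighborFinset,
      Sym2.eq_iff]
    grind [G.adj_symm]

theorem sum_incidenceFinset_eq_sum_neighborFinset_s2 {M : Type*} [AddCommMonoid M]
    (w : Sym2 V → M) (v : V) :
    ∑ e ∈ G.incidenceFinset v, w e = ∑ u ∈ G.neighborFinset v, w s(v, u) := by
  rw [incidenceFinset_eq_image_neighborFinset, sum_image fun _ _ _ _ => Sym2.congr_right.mp]

theorem sum_sum_neighborFinset_inter_comm {M : Type*} [AddCommMonoid M] (w : Sym2 V → M)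
    (S T : Finset V) :
    ∑ v ∈ T, ∑ u ∈ G.neighborFinset v ∩ S, w s(v, u) =
      ∑ u ∈ S, ∑ v ∈ G.neighborFinset u ∩ T, w s(u, v) := by
  refine sum_comm' (fun v u => ?_) |>.trans (sum_congr rfl fun u _ =>
    sum_congr rfl fun v _ => congrArg w Sym2.eq_swap)
  simp only [mem_inter, mem_neighborFinset, G.adj_comm v u]
  tauto

theorem sum_neighborFinset_sdiff_le_dOut {w : Sym2 V → ℝ} (hw : ∀ e ∈ G.edgeFinset, w e ≤ 1)
    (S : Finset V) (v : V) :
    ∑ u ∈ G.neighborFinset v \ S, w s(v, u) ≤ dOut G S v := by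
  simpa [dOut] using sum_le_card_nsmul _ _ 1 fun u hu =>
    hw s(v, u) (mem_edgeFinset.2 ((mem_neighborFinset G v u).1 (mem_sdiff.1 hu).1))

theorem sum_sum_incidenceFinset_le {w : Sym2 V → ℝ}
    (hw : ∀ e ∈ G.edgeFinset, 0 ≤ w e ∧ w e ≤ 1) (S T : Finset V) :
    ∑ v ∈ T, ∑ e ∈ G.incidenceFinset v, w e ≤
      ∑ u ∈ S, ∑ e ∈ G.incidenceFinset u, w e + ∑ v ∈ T, (dOut G S v : ℝ) := by
  simp only [sum_incidenceFinset_eq_sum_neighborFinset_s2]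
  calc ∑ v ∈ T, ∑ u ∈ G.neighborFinset v, w s(v, u)
      = ∑ v ∈ T, ∑ u ∈ G.neighborFinset v ∩ S, w s(v, u) +
          ∑ v ∈ T, ∑ u ∈ G.neighborFinset v \ S, w s(v, u) := by
        rw [← sum_add_distrib]
        simp only [sum_inter_add_sum_sdiff]
    _ ≤ ∑ u ∈ S, ∑ v ∈ G.neighborFinset u ∩ T, w s(u, v) + ∑ v ∈ T, (dOut G S v : ℝ) := by
        rw [sum_sum_neighborFinset_inter_comm]
        gcongr with v
        exact sum_neighborFinset_sdiff_le_dOut (fun e he => (hw e he).2) S v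
    _ ≤ ∑ u ∈ S, ∑ v ∈ G.neighborFinset u, w s(u, v) + ∑ v ∈ T, (dOut G S v : ℝ) := by
        gcongr with u
        · intro v hv _
          exact (hw s(u, v) (mem_edgeFinset.2 ((mem_neighborFinset G u v).1 hv))).1
        · exact inter_subset_left

theorem not_isFracFactor_of_violation {g f : V → ℕ} {S : Finset V}
    (hS : (∑ v ∈ S, (g v : ℤ)) - (∑ v ∈ Tset G f S, (f v : ℤ)) +
        ∑ v ∈ Tset G f S, (dOut G S v : ℤ) < 0) (w : Sym2 V → ℝ) :
    ¬ IsFracFactor G (fun v => if v ∈ S then g v else f v)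
      (fun v => if v ∈ S then g v else f v) w := by
  rintro ⟨hw, hdeg⟩
  have deg (v : V) : ∑ e ∈ G.incidenceFinset v, w e = if v ∈ S then g v else f v := by
    simpa using le_antisymm (hdeg v).2 (hdeg v).1
  have hSdeg : ∑ u ∈ S, ∑ e ∈ G.incidenceFinset u, w e = ∑ u ∈ S, (g u : ℝ) :=
    sum_congr rfl fun u hu => by simp [deg, hu]
  have hTdeg : ∑ v ∈ Tset G f S, ∑ e ∈ G.incidenceFinset v, w e =
      ∑ v ∈ Tset G f S, (f v : ℝ) :=
    sum_congr rfl fun v hv => by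
      simp [deg, (mem_compl.1 (mem_filter.1 hv).1)]
  have key := sum_sum_incidenceFinset_le hw S (Tset G f S)
  rw [hSdeg, hTdeg] at key
  have hSℝ : (∑ v ∈ S, (g v : ℝ)) - (∑ v ∈ Tset G f S, (f v : ℝ)) +
      ∑ v ∈ Tset G f S, (dOut G S v : ℝ) < 0 := by
    exact_mod_cast hS
  linarith

end SimpleGraph

/-- Necessity in Theorem 5: if some `S ⊆ V(G)` violates the condition, then `G` does not
have all fractional `(g,f)`-factors; more precisely, the function `h` equal to `g` on `S`
and to `f` off `S` satisfies `g ≤ h ≤ f` and `G` has no fractional `h`-factor. -/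
theorem no_fractional_factor_of_violation {V : Type*} [Fintype V] [DecidableEq V]
    (G : SimpleGraph V) [DecidableRel G.Adj] (g f : V → ℕ) (hgf : ∀ x, g x ≤ f x)
    (S : Finset V)
    (hS : (∑ v ∈ S, (g v : ℤ)) - (∑ v ∈ Tset G f S, (f v : ℤ)) +
        ∑ v ∈ Tset G f S, (dOut G S v : ℤ) < 0) :
    ¬ HasAllFracFactors G g f ∧
      (∀ v, g v ≤ (if v ∈ S then g v else f v) ∧ (if v ∈ S then g v else f v) ≤ f v) ∧
      ¬ ∃ h' : Sym2 V → ℝ,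
        IsFracFactor G (fun v => if v ∈ S then g v else f v)
          (fun v => if v ∈ S then g v else f v) h' := by
  have between (v : V) :
      g v ≤ (if v ∈ S then g v else f v) ∧ (if v ∈ S then g v else f v) ≤ f v := by
    split_ifs
    exacts [⟨le_rfl, hgf v⟩, ⟨hgf v, le_rfl⟩]
  have no_factor : ¬ ∃ h', IsFracFactor G (fun v => if v ∈ S then g v else f v)
      (fun v => if v ∈ S then g v else f v) h' :=
    fun ⟨w, hw⟩ => SimpleGraph.not_isFracFactor_of_violation hS w hw
  exact ⟨fun hall => no_factor (hall _ (fun v => (between v).1) fun v => (between v).2),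
    between, no_factor⟩
end

section
/- Let G be a finite simple graph and let a < b be two positive integers. Then G has all fractional [a,b]-factors if and only if for every subset S ⊆ V(G), one has a·|S| − b·|T| + Σ_{x∈T} d_{G−S}(x) ≥ 0, where T = {v ∈ V(G) − S : d_{G−S}(v) < b} and d_{G−S}(v) denotes the degree of v in the induced subgraph G − S. -/
open Finset

section Aux

set_option linter.unusedSectionVars false

variable {V : Type*} [Fintype V] [DecidableEq V]

def asum (A : V → Finset V) (X Y : Finset V) : ℕ := ∑ x ∈ X, ((A x) \ Y).card

omit [Fintype V] in
lemma card_sdiff_mod (s Y1 Y2 : Finset V) :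
    (s \ (Y1 ∩ Y2)).card + (s \ (Y1 ∪ Y2)).card = (s \ Y1).card + (s \ Y2).card := by
  have h1 : s \ (Y1 ∩ Y2) = (s \ Y1) ∪ (s \ Y2) := by ext z; simp; tauto
  have h2 : s \ (Y1 ∪ Y2) = (s \ Y1) ∩ (s \ Y2) := by ext z; simp; tauto
  rw [h1, h2, Finset.card_union_add_card_inter]

omit [Fintype V] in
lemma sum_piece (f : V → ℕ) (X1 X2 : Finset V) :
    ∑ x ∈ X1, f x = ∑ x ∈ X1 ∩ X2, f x + ∑ x ∈ X1 \ X2, f x := by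
  have hu : X1 ∩ X2 ∪ X1 \ X2 = X1 := by ext z; simp; tauto
  have hd : Disjoint (X1 ∩ X2) (X1 \ X2) := by
    rw [Finset.disjoint_left]; intro z h1 h2
    exact (Finset.mem_sdiff.mp h2).2 (Finset.mem_inter.mp h1).2
  have h := Finset.sum_union hd (f := f)
  rw [hu] at h
  omega

omit [Fintype V] in
lemma sum_three_decomp (f : V → ℕ) (X1 X2 : Finset V) :
    ∑ x ∈ X1 ∪ X2, f x = ∑ x ∈ X1 ∩ X2, f x + ∑ x ∈ X1 \ X2, f x + ∑ x ∈ X2 \ X1, f x := by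
  have hu : X1 ∪ X2 = X1 ∪ X2 \ X1 := by ext z; simp
  have hd : Disjoint X1 (X2 \ X1) := by
    rw [Finset.disjoint_left]; intro z h1 h2
    exact (Finset.mem_sdiff.mp h2).2 h1
  have h : ∑ x ∈ X1 ∪ X2, f x = ∑ x ∈ X1, f x + ∑ x ∈ X2 \ X1, f x := by
    rw [hu]; exact Finset.sum_union hd
  have h2 := sum_piece f X1 X2
  omega

omit [Fintype V] in
lemma sum_mod (f : V → ℕ) (Y1 Y2 : Finset V) :
    ∑ y ∈ Y1 ∩ Y2, f y + ∑ y ∈ Y1 ∪ Y2, f y = ∑ y ∈ Y1, f y + ∑ y ∈ Y2, f y := by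
  have h1 := sum_three_decomp f Y1 Y2
  have h2 := sum_piece f Y1 Y2
  have h3 := sum_piece f Y2 Y1
  rw [Finset.inter_comm] at h3
  omega

omit [Fintype V] in
lemma asum_submod (A : V → Finset V) (X1 Y1 X2 Y2 : Finset V) :
    asum A (X1 ∩ X2) (Y1 ∩ Y2) + asum A (X1 ∪ X2) (Y1 ∪ Y2) ≤ asum A X1 Y1 + asum A X2 Y2 := by
  unfold asum
  rw [sum_three_decomp (fun x => ((A x) \ (Y1 ∪ Y2)).card) X1 X2]
  have hmod : ∑ x ∈ X1 ∩ X2, ((A x) \ (Y1 ∩ Y2)).card + ∑ x ∈ X1 ∩ X2, ((A x) \ (Y1 ∪ Y2)).card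
      = ∑ x ∈ X1 ∩ X2, ((A x) \ Y1).card + ∑ x ∈ X1 ∩ X2, ((A x) \ Y2).card := by
    rw [← Finset.sum_add_distrib, ← Finset.sum_add_distrib]
    exact Finset.sum_congr rfl fun x _ => card_sdiff_mod (A x) Y1 Y2
  have hb1 : ∑ x ∈ X1 \ X2, ((A x) \ (Y1 ∪ Y2)).card ≤ ∑ x ∈ X1 \ X2, ((A x) \ Y1).card :=
    Finset.sum_le_sum fun x _ => Finset.card_le_card
      (Finset.sdiff_subset_sdiff (Finset.Subset.refl _) Finset.subset_union_left)
  have hb2 : ∑ x ∈ X2 \ X1, ((A x) \ (Y1 ∪ Y2)).card ≤ ∑ x ∈ X2 \ X1, ((A x) \ Y2).card :=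
    Finset.sum_le_sum fun x _ => Finset.card_le_card
      (Finset.sdiff_subset_sdiff (Finset.Subset.refl _) Finset.subset_union_right)
  have d1 := sum_piece (fun x => ((A x) \ Y1).card) X1 X2
  have d2 := sum_piece (fun x => ((A x) \ Y2).card) X2 X1
  rw [Finset.inter_comm] at d2
  omega

lemma tight_inf (A : V → Finset V) (r c : V → ℕ)
    (hcond : ∀ X Y : Finset V, ∑ x ∈ X, r x ≤ ∑ y ∈ Y, c y + asum A X Y)
    {X1 Y1 X2 Y2 : Finset V}
    (h1 : ∑ y ∈ Y1, c y + asum A X1 Y1 = ∑ x ∈ X1, r x)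
    (h2 : ∑ y ∈ Y2, c y + asum A X2 Y2 = ∑ x ∈ X2, r x) :
    ∑ y ∈ Y1 ∩ Y2, c y + asum A (X1 ∩ X2) (Y1 ∩ Y2) = ∑ x ∈ X1 ∩ X2, r x := by
  have hs := asum_submod A X1 Y1 X2 Y2
  have hcY := sum_mod c Y1 Y2
  have hrX := sum_mod r X1 X2
  have hc1 := hcond (X1 ∩ X2) (Y1 ∩ Y2)
  have hc2 := hcond (X1 ∪ X2) (Y1 ∪ Y2)
  omega

lemma exists_cell (A : V → Finset V) (r c : V → ℕ)
    (hcond : ∀ X Y : Finset V, ∑ x ∈ X, r x ≤ ∑ y ∈ Y, c y + asum A X Y)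
    (X1 Y1 : Finset V)
    (ht : ∑ y ∈ Y1, c y + asum A X1 Y1 = ∑ x ∈ X1, r x)
    (hc : 0 < ∑ y ∈ Y1, c y) :
    ∃ x2 ∈ X1, 0 < r x2 ∧ ∃ y2 ∈ A x2, y2 ∈ Y1 ∧ 0 < c y2 := by
  classical
  set X1' := X1.filter (fun x => r x ≠ 0) with hX1'
  set C0 := Y1.filter (fun y => c y ≠ 0) with hC0
  have h0 := hcond X1' (Y1 \ C0)
  have hzero : ∑ y ∈ Y1 \ C0, c y = 0 := by
    refine Finset.sum_eq_zero fun y hy => ?_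
    have h := Finset.mem_sdiff.mp hy
    by_contra hne
    exact h.2 (Finset.mem_filter.mpr ⟨h.1, hne⟩)
  have hre : ∑ x ∈ X1', r x = ∑ x ∈ X1, r x := Finset.sum_filter_ne_zero X1
  have hsplit : asum A X1' (Y1 \ C0)
      = ∑ x ∈ X1', (A x \ Y1).card + ∑ x ∈ X1', (A x ∩ C0).card := by
    unfold asum
    rw [← Finset.sum_add_distrib]
    refine Finset.sum_congr rfl fun x _ => ?_
    have he : A x \ (Y1 \ C0) = (A x \ Y1) ∪ (A x ∩ C0) := by
      ext z
      simp only [Finset.mem_sdiff, Finset.mem_union, Finset.mem_inter, hC0, Finset.mem_filter]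
      tauto
    have hd : Disjoint (A x \ Y1) (A x ∩ C0) := by
      rw [Finset.disjoint_left]
      intro z hz1 hz2
      exact (Finset.mem_sdiff.mp hz1).2 (Finset.mem_filter.mp (Finset.mem_inter.mp hz2).2).1
    rw [he, Finset.card_union_of_disjoint hd]
  have hmono : ∑ x ∈ X1', (A x \ Y1).card ≤ asum A X1 Y1 :=
    Finset.sum_le_sum_of_subset (Finset.filter_subset _ _)
  have hpos : 0 < ∑ x ∈ X1', (A x ∩ C0).card := by omega
  obtain ⟨x2, hx2, hcard⟩ : ∃ x ∈ X1', 0 < (A x ∩ C0).card := by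
    by_contra hno
    push_neg at hno
    have : ∑ x ∈ X1', (A x ∩ C0).card = 0 :=
      Finset.sum_eq_zero fun x hx => Nat.le_zero.mp (hno x hx)
    omega
  obtain ⟨y2, hy2⟩ := Finset.card_pos.mp hcard
  have hy2' := Finset.mem_inter.mp hy2
  have hy2C := Finset.mem_filter.mp hy2'.2
  have hx2' := Finset.mem_filter.mp hx2
  exact ⟨x2, hx2'.1, Nat.pos_of_ne_zero hx2'.2, y2, hy2'.1, hy2C.1,
    Nat.pos_of_ne_zero hy2C.2⟩

lemma basic_cell (A : V → Finset V) (r c : V → ℕ)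
    (hpos : 0 < ∑ x, r x)
    (hcond : ∀ X Y : Finset V, ∑ x ∈ X, r x ≤ ∑ y ∈ Y, c y + asum A X Y) :
    ∃ x0 y0, 0 < r x0 ∧ 0 < c y0 ∧ y0 ∈ A x0 := by
  classical
  set X0 := univ.filter (fun x => r x ≠ 0) with hX0
  set Y0 := univ.filter (fun y => c y = 0) with hY0
  have h := hcond X0 Y0
  have h1 : ∑ x ∈ X0, r x = ∑ x, r x := Finset.sum_filter_ne_zero univ
  have h2 : ∑ y ∈ Y0, c y = 0 :=
    Finset.sum_eq_zero fun y hy => (Finset.mem_filter.mp hy).2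
  have hA : 0 < asum A X0 Y0 := by omega
  obtain ⟨x0, hx0, hcard⟩ : ∃ x ∈ X0, 0 < (A x \ Y0).card := by
    by_contra hno
    push_neg at hno
    have : asum A X0 Y0 = 0 :=
      Finset.sum_eq_zero fun x hx => Nat.le_zero.mp (hno x hx)
    omega
  obtain ⟨y0, hy0⟩ := Finset.card_pos.mp hcard
  have hy0' := Finset.mem_sdiff.mp hy0
  have hcy0 : c y0 ≠ 0 := fun hzero => hy0'.2 (Finset.mem_filter.mpr ⟨Finset.mem_univ _, hzero⟩)
  exact ⟨x0, y0, Nat.pos_of_ne_zero (Finset.mem_filter.mp hx0).2, Nat.pos_of_ne_zero hcy0, hy0'.1⟩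

lemma exists_valid_cell (A : V → Finset V) (r c : V → ℕ)
    (hpos : 0 < ∑ x, r x)
    (hcond : ∀ X Y : Finset V, ∑ x ∈ X, r x ≤ ∑ y ∈ Y, c y + asum A X Y) :
    ∃ x0 y0, 0 < r x0 ∧ 0 < c y0 ∧ y0 ∈ A x0 ∧
      ∀ X Y : Finset V, (∑ y ∈ Y, c y + asum A X Y = ∑ x ∈ X, r x) → y0 ∈ Y → x0 ∈ X := by
  classical
  set T : V → Finset (Finset V × Finset V) := fun y => univ.filter (fun p =>
    (∑ yy ∈ p.2, c yy + asum A p.1 p.2 = ∑ x ∈ p.1, r x) ∧ y ∈ p.2) with hTdef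
  set Ypos := univ.filter (fun y => 0 < c y ∧ (T y).Nonempty) with hYdef
  by_cases hY : Ypos.Nonempty
  · obtain ⟨ys, hysmem, hysmax⟩ := Ypos.exists_max_image (fun y => (T y).card) hY
    have hys : 0 < c ys ∧ (T ys).Nonempty := (Finset.mem_filter.mp hysmem).2
    have hclosure : ∀ p ∈ ((T ys : Finset _) : Set (Finset V × Finset V)),
        ∀ q ∈ ((T ys : Finset _) : Set (Finset V × Finset V)),
        p ⊓ q ∈ ((T ys : Finset _) : Set (Finset V × Finset V)) := by
      intro p hp q hq
      simp only [Finset.coe_filter, Set.mem_setOf_eq, hTdef, Finset.mem_coe,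
        Finset.mem_filter] at hp hq ⊢
      refine ⟨Finset.mem_univ _, tight_inf A r c hcond hp.2.1 hq.2.1, Finset.mem_inter.mpr ⟨hp.2.2, hq.2.2⟩⟩
    have hPmem : (T ys).inf' hys.2 id ∈ T ys :=
      Finset.inf'_mem ((T ys : Finset _) : Set (Finset V × Finset V)) hclosure (T ys) hys.2 id
        (fun i hi => hi)
    set P := (T ys).inf' hys.2 id with hP
    have hPt := Finset.mem_filter.mp hPmem
    have hcP : 0 < ∑ y ∈ P.2, c y :=
      lt_of_lt_of_le hys.1 (Finset.single_le_sum (fun _ _ => Nat.zero_le _) hPt.2.2)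
    obtain ⟨x2, hx2P, hrx2, y2, hy2A, hy2P, hcy2⟩ :=
      exists_cell A r c hcond P.1 P.2 hPt.2.1 hcP
    refine ⟨x2, y2, hrx2, hcy2, hy2A, ?_⟩
    intro X Y htight hy2Y
    have hsub : T ys ⊆ T y2 := by
      intro p hp
      have hp' := Finset.mem_filter.mp hp
      have hle : P ≤ p := Finset.inf'_le id hp
      exact Finset.mem_filter.mpr ⟨Finset.mem_univ _, hp'.2.1, hle.2 hy2P⟩
    have hXYmem : (X, Y) ∈ T y2 :=
      Finset.mem_filter.mpr ⟨Finset.mem_univ _, htight, hy2Y⟩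
    have hy2pos : y2 ∈ Ypos :=
      Finset.mem_filter.mpr ⟨Finset.mem_univ _, hcy2, ⟨(X, Y), hXYmem⟩⟩
    have heq : T ys = T y2 := Finset.eq_of_subset_of_card_le hsub (hysmax y2 hy2pos)
    have hXY : (X, Y) ∈ T ys := heq ▸ hXYmem
    have hle : P ≤ (X, Y) := Finset.inf'_le id hXY
    exact hle.1 hx2P
  · obtain ⟨x0, y0, hrx0, hcy0, hy0A⟩ := basic_cell A r c hpos hcond
    refine ⟨x0, y0, hrx0, hcy0, hy0A, ?_⟩
    intro X Y htight hy0Y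
    exfalso
    exact hY ⟨y0, Finset.mem_filter.mpr ⟨Finset.mem_univ _, hcy0,
      ⟨(X, Y), Finset.mem_filter.mpr ⟨Finset.mem_univ _, htight, hy0Y⟩⟩⟩⟩

theorem transport : ∀ (n : ℕ) (A : V → Finset V) (r c : V → ℕ),
    (∑ x, r x = n) → (∑ x, r x = ∑ y, c y) →
    (∀ X Y : Finset V, ∑ x ∈ X, r x ≤ ∑ y ∈ Y, c y + asum A X Y) →
    ∃ M : V → Finset V, (∀ x, M x ⊆ A x) ∧ (∀ x, (M x).card = r x) ∧
      (∀ y, (univ.filter (fun x => y ∈ M x)).card = c y) := by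
  intro n
  induction n with
  | zero =>
    intro A r c hn hrc hcond
    refine ⟨fun _ => ∅, fun x => Finset.empty_subset _, fun x => ?_, fun y => ?_⟩
    · have hr : r x = 0 := by
        have := Finset.sum_eq_zero_iff.mp hn x (Finset.mem_univ x)
        simpa using this
      simp [hr]
    · have hc : ∑ y, c y = 0 := by omega
      have hcy : c y = 0 := Finset.sum_eq_zero_iff.mp hc y (Finset.mem_univ y)
      simp [hcy]
  | succ n IH =>
    intro A r c hn hrc hcond
    classical
    have hpos : 0 < ∑ x, r x := by omega
    obtain ⟨x0, y0, hrx0, hcy0, hy0A, hkey⟩ := exists_valid_cell A r c hpos hcond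
    set r' : V → ℕ := Function.update r x0 (r x0 - 1) with hr'
    set c' : V → ℕ := Function.update c y0 (c y0 - 1) with hc'
    set A' : V → Finset V := Function.update A x0 ((A x0).erase y0) with hA'
    -- row sums under update
    have hrowsum : ∀ X : Finset V, x0 ∈ X → ∑ x ∈ X, r' x = ∑ x ∈ X, r x - 1 ∧ 0 < ∑ x ∈ X, r x := by
      intro X hx
      have h1 := Finset.sum_update_of_mem hx r (r x0 - 1)
      rw [← hr'] at h1
      have h2 := Finset.sum_eq_sum_sdiff_singleton_add hx r
      constructor <;> omega
    have hrowsum' : ∀ X : Finset V, x0 ∉ X → ∑ x ∈ X, r' x = ∑ x ∈ X, r x := by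
      intro X hx
      refine Finset.sum_congr rfl fun x hxX => ?_
      exact Function.update_of_ne (ne_of_mem_of_not_mem hxX hx) _ r
    have hcolsum : ∀ Y : Finset V, y0 ∈ Y → ∑ y ∈ Y, c' y = ∑ y ∈ Y, c y - 1 ∧ 0 < ∑ y ∈ Y, c y := by
      intro Y hy
      have h1 := Finset.sum_update_of_mem hy c (c y0 - 1)
      rw [← hc'] at h1
      have h2 := Finset.sum_eq_sum_sdiff_singleton_add hy c
      constructor <;> omega
    have hcolsum' : ∀ Y : Finset V, y0 ∉ Y → ∑ y ∈ Y, c' y = ∑ y ∈ Y, c y := by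
      intro Y hy
      refine Finset.sum_congr rfl fun y hyY => ?_
      exact Function.update_of_ne (ne_of_mem_of_not_mem hyY hy) _ c
    -- asum under update
    have hasum' : ∀ X Y : Finset V, x0 ∉ X → asum A' X Y = asum A X Y := by
      intro X Y hx
      refine Finset.sum_congr rfl fun x hxX => ?_
      rw [hA', Function.update_of_ne (ne_of_mem_of_not_mem hxX hx) _ A]
    have hasum_in : ∀ X Y : Finset V, x0 ∈ X → y0 ∈ Y → asum A' X Y = asum A X Y := by
      intro X Y hx hy
      refine Finset.sum_congr rfl fun x hxX => ?_
      by_cases hxx : x = x0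
      · subst hxx
        rw [hA', Function.update_self]
        congr 1
        ext z
        simp only [Finset.mem_sdiff, Finset.mem_erase]
        constructor
        · rintro ⟨⟨_, hz⟩, hz2⟩; exact ⟨hz, hz2⟩
        · rintro ⟨hz, hz2⟩
          exact ⟨⟨fun hzy => hz2 (hzy ▸ hy), hz⟩, hz2⟩
      · rw [hA', Function.update_of_ne hxx _ A]
    have hasum_out : ∀ X Y : Finset V, x0 ∈ X → y0 ∉ Y →
        asum A' X Y = asum A X Y - 1 ∧ 0 < asum A X Y := by
      intro X Y hx hy
      have h1 : ((A' x0) \ Y).card + 1 = ((A x0) \ Y).card := by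
        rw [hA', Function.update_self]
        have he : (A x0).erase y0 \ Y = ((A x0) \ Y).erase y0 := by
          ext z; simp only [Finset.mem_sdiff, Finset.mem_erase]; tauto
        rw [he]
        have hy0mem : y0 ∈ (A x0) \ Y := Finset.mem_sdiff.mpr ⟨hy0A, hy⟩
        rw [Finset.card_erase_of_mem hy0mem]
        have := Finset.card_pos.mpr ⟨y0, hy0mem⟩
        omega
      have h2 : ∀ x ∈ X \ {x0}, ((A' x) \ Y).card = ((A x) \ Y).card := by
        intro x hxm
        have hne : x ≠ x0 := by
          have := (Finset.mem_sdiff.mp hxm).2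
          simpa using this
        rw [hA', Function.update_of_ne hne _ A]
      have d1 := Finset.sum_eq_sum_sdiff_singleton_add hx (fun x => ((A' x) \ Y).card)
      have d2 := Finset.sum_eq_sum_sdiff_singleton_add hx (fun x => ((A x) \ Y).card)
      have d3 : ∑ x ∈ X \ {x0}, ((A' x) \ Y).card = ∑ x ∈ X \ {x0}, ((A x) \ Y).card :=
        Finset.sum_congr rfl h2
      unfold asum
      omega
    -- condition for the primed system
    have hcond' : ∀ X Y : Finset V, ∑ x ∈ X, r' x ≤ ∑ y ∈ Y, c' y + asum A' X Y := by
      intro X Y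
      have hXY := hcond X Y
      by_cases hx : x0 ∈ X <;> by_cases hy : y0 ∈ Y
      · have hr := hrowsum X hx
        have hc := hcolsum Y hy
        have ha := hasum_in X Y hx hy
        omega
      · have hr := hrowsum X hx
        have hc := hcolsum' Y hy
        have ha := hasum_out X Y hx hy
        omega
      · have hr := hrowsum' X hx
        have hc := hcolsum Y hy
        have ha := hasum' X Y hx
        have hnt : ¬(∑ y ∈ Y, c y + asum A X Y = ∑ x ∈ X, r x) :=
          fun ht => hx (hkey X Y ht hy)
        omega
      · have hr := hrowsum' X hx
        have hc := hcolsum' Y hy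
        have ha := hasum' X Y hx
        omega
    -- total sums
    have hsumr' : ∑ x, r' x = n := by
      have := hrowsum univ (Finset.mem_univ x0)
      omega
    have hsumc' : ∑ y, c' y = n := by
      have := hcolsum univ (Finset.mem_univ y0)
      omega
    obtain ⟨M', hMA, hMcard, hMcol⟩ :=
      IH A' r' c' hsumr' (by omega) hcond'
    have hy0notin : y0 ∉ M' x0 := by
      intro hmem
      have := hMA x0 hmem
      rw [hA', Function.update_self] at this
      exact (Finset.mem_erase.mp this).1 rfl
    refine ⟨Function.update M' x0 (insert y0 (M' x0)), ?_, ?_, ?_⟩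
    · intro x
      by_cases hxx : x = x0
      · subst hxx
        rw [Function.update_self]
        intro z hz
        rcases Finset.mem_insert.mp hz with rfl | hz'
        · exact hy0A
        · have := hMA x hz'
          rw [hA', Function.update_self] at this
          exact Finset.erase_subset _ _ this
      · rw [Function.update_of_ne hxx]
        have := hMA x
        rw [hA', Function.update_of_ne hxx _ A] at this
        exact this
    · intro x
      by_cases hxx : x = x0
      · subst hxx
        rw [Function.update_self, Finset.card_insert_of_notMem hy0notin, hMcard x, hr',
          Function.update_self]
        omega
      · rw [Function.update_of_ne hxx, hMcard x, hr', Function.update_of_ne hxx _ r]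
    · intro y
      by_cases hyy : y = y0
      · subst hyy
        have hfe : univ.filter (fun x => y ∈ Function.update M' x0 (insert y (M' x0)) x)
            = insert x0 (univ.filter (fun x => y ∈ M' x)) := by
          ext x
          simp only [Finset.mem_filter, Finset.mem_univ, true_and, Finset.mem_insert]
          by_cases hxx : x = x0
          · subst hxx
            simp [Function.update_self]
          · rw [Function.update_of_ne hxx]
            simp [hxx]
        rw [hfe, Finset.card_insert_of_notMem (by simp [hy0notin]), hMcol y, hc',
          Function.update_self]
        omega
      · have hfe : univ.filter (fun x => y ∈ Function.update M' x0 (insert y0 (M' x0)) x)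
            = univ.filter (fun x => y ∈ M' x) := by
          ext x
          simp only [Finset.mem_filter, Finset.mem_univ, true_and]
          by_cases hxx : x = x0
          · subst hxx
            rw [Function.update_self]
            simp [hyy]
          · rw [Function.update_of_ne hxx]
        rw [hfe, hMcol y, hc', Function.update_of_ne hyy _ c]


lemma condq (G : SimpleGraph V) [DecidableRel G.Adj] (a b : ℕ)
    (hcond : ∀ S : Finset V,
      0 ≤ (a : ℤ) * S.card - (b : ℤ) * (Tset G (fun _ => b) S).card +
          ∑ v ∈ Tset G (fun _ => b) S, (dOut G S v : ℤ))
    (q : V → ℕ) (haq : ∀ v, a ≤ q v) (hqb : ∀ v, q v ≤ b) (S : Finset V) :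
    ∑ x ∈ Tset G q S, (q x - dOut G S x) ≤ ∑ x ∈ S, q x := by
  classical
  have hsub : Tset G q S ⊆ Tset G (fun _ => b) S := by
    intro v hv
    have hv' := Finset.mem_filter.mp hv
    exact Finset.mem_filter.mpr ⟨hv'.1, lt_of_lt_of_le hv'.2 (hqb v)⟩
  have h1 : ∑ x ∈ Tset G q S, (q x - dOut G S x) ≤ ∑ x ∈ Tset G q S, (b - dOut G S x) :=
    Finset.sum_le_sum fun x _ => by have := hqb x; omega
  have h2 : ∑ x ∈ Tset G q S, (b - dOut G S x) ≤ ∑ x ∈ Tset G (fun _ => b) S, (b - dOut G S x) :=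
    Finset.sum_le_sum_of_subset hsub
  have h3 : ∑ x ∈ Tset G (fun _ => b) S, (b - dOut G S x) ≤ a * S.card := by
    have hc := hcond S
    have hlt : ∀ x ∈ Tset G (fun _ => b) S, dOut G S x < b := fun x hx =>
      (Finset.mem_filter.mp hx).2
    have e1 : (↑(∑ x ∈ Tset G (fun _ => b) S, (b - dOut G S x)) : ℤ)
        = ∑ x ∈ Tset G (fun _ => b) S, ((b : ℤ) - (dOut G S x : ℤ)) := by
      rw [Nat.cast_sum]
      exact Finset.sum_congr rfl fun x hx => Nat.cast_sub (le_of_lt (hlt x hx))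
    have e2 : ∑ x ∈ Tset G (fun _ => b) S, ((b:ℤ) - (dOut G S x:ℤ))
        = (b:ℤ) * (Tset G (fun _ => b) S).card - ∑ v ∈ Tset G (fun _ => b) S, (dOut G S v : ℤ) := by
      rw [Finset.sum_sub_distrib, Finset.sum_const, nsmul_eq_mul, mul_comm]
    have e3 : (↑(∑ x ∈ Tset G (fun _ => b) S, (b - dOut G S x)) : ℤ) ≤ (a:ℤ) * S.card := by
      rw [e1, e2]; linarith
    exact_mod_cast e3
  have h4 : a * S.card ≤ ∑ x ∈ S, q x := by
    calc a * S.card = ∑ _x ∈ S, a := by rw [Finset.sum_const, smul_eq_mul, mul_comm]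
    _ ≤ ∑ x ∈ S, q x := Finset.sum_le_sum fun x _ => haq x
  omega

lemma sum_piece' (f : V → ℕ) (X1 X2 : Finset V) :
    ∑ x ∈ X1, f x = ∑ x ∈ X1 ∩ X2, f x + ∑ x ∈ X1 \ X2, f x := by
  have hu : X1 ∩ X2 ∪ X1 \ X2 = X1 := by ext z; simp; tauto
  have hd : Disjoint (X1 ∩ X2) (X1 \ X2) := by
    rw [Finset.disjoint_left]; intro z h1 h2
    exact (Finset.mem_sdiff.mp h2).2 (Finset.mem_inter.mp h1).2
  have h := Finset.sum_union hd (f := f)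
  rw [hu] at h
  omega

lemma double_count (G : SimpleGraph V) [DecidableRel G.Adj] (P Q : Finset V) :
    ∑ x ∈ P, (G.neighborFinset x ∩ Q).card = ∑ z ∈ Q, (G.neighborFinset z ∩ P).card := by
  have key : ∀ (R T : Finset V), ∀ x, (G.neighborFinset x ∩ R).card
      = ∑ z ∈ R, (if G.Adj x z then 1 else 0) := by
    intro R T x
    rw [← Finset.card_filter]
    congr 1
    ext z
    simp [SimpleGraph.mem_neighborFinset, and_comm]
  calc ∑ x ∈ P, (G.neighborFinset x ∩ Q).card
      = ∑ x ∈ P, ∑ z ∈ Q, (if G.Adj x z then 1 else 0) :=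
        Finset.sum_congr rfl fun x _ => key Q P x
    _ = ∑ z ∈ Q, ∑ x ∈ P, (if G.Adj x z then 1 else 0) := Finset.sum_comm
    _ = ∑ z ∈ Q, (G.neighborFinset z ∩ P).card := by
        refine Finset.sum_congr rfl fun z _ => ?_
        rw [key P Q z]
        refine Finset.sum_congr rfl fun x _ => ?_
        by_cases h : G.Adj x z
        · simp [h, h.symm]
        · rw [if_neg h, if_neg (fun hh : G.Adj z x => h hh.symm)]

lemma pairform (G : SimpleGraph V) [DecidableRel G.Adj] (a b : ℕ)
    (hcond : ∀ S : Finset V,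
      0 ≤ (a : ℤ) * S.card - (b : ℤ) * (Tset G (fun _ => b) S).card +
          ∑ v ∈ Tset G (fun _ => b) S, (dOut G S v : ℤ))
    (q : V → ℕ) (haq : ∀ v, a ≤ q v) (hqb : ∀ v, q v ≤ b) (X Y : Finset V) :
    ∑ x ∈ X, q x ≤ ∑ y ∈ Y, q y + ∑ x ∈ X, (G.neighborFinset x \ Y).card := by
  classical
  set S := Y \ X with hS
  set T1 := Tset G q S with hT1
  have hcq := condq G a b hcond q haq hqb S
  have hper : ∀ x ∈ X \ Y, q x ≤ (G.neighborFinset x \ Y).card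
      + (G.neighborFinset x ∩ (X ∩ Y)).card
      + (if x ∈ T1 then q x - dOut G S x else 0) := by
    intro x hx
    have hxX : x ∈ X := (Finset.mem_sdiff.mp hx).1
    have hdecomp : dOut G S x = (G.neighborFinset x \ Y).card
        + (G.neighborFinset x ∩ (X ∩ Y)).card := by
      unfold dOut
      have hd : Disjoint (G.neighborFinset x \ Y) (G.neighborFinset x ∩ (X ∩ Y)) := by
        rw [Finset.disjoint_left]; intro z h1 h2
        exact (Finset.mem_sdiff.mp h1).2 (Finset.mem_inter.mp (Finset.mem_inter.mp h2).2).2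
      rw [← Finset.card_union_of_disjoint hd]
      congr 1
      ext z
      simp only [Finset.mem_sdiff, hS, Finset.mem_union, Finset.mem_inter]
      tauto
    by_cases hT : x ∈ T1
    · have hlt : dOut G S x < q x := (Finset.mem_filter.mp hT).2
      simp only [hT, if_true]
      omega
    · simp only [hT, if_false]
      have hxS : x ∈ Sᶜ := by
        simp only [Finset.mem_compl, hS, Finset.mem_sdiff]
        tauto
      have hge : ¬(dOut G S x < q x) := fun hlt => hT (Finset.mem_filter.mpr ⟨hxS, hlt⟩)
      omega
  have hsum1 : ∑ x ∈ X \ Y, q x ≤ ∑ x ∈ X \ Y, (G.neighborFinset x \ Y).card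
      + ∑ x ∈ X \ Y, (G.neighborFinset x ∩ (X ∩ Y)).card
      + ∑ x ∈ X \ Y, (if x ∈ T1 then q x - dOut G S x else 0) := by
    have := Finset.sum_le_sum hper
    simpa [Finset.sum_add_distrib] using this
  have hsum2 : ∑ x ∈ X \ Y, (if x ∈ T1 then q x - dOut G S x else 0)
      ≤ ∑ x ∈ T1, (q x - dOut G S x) := by
    rw [Finset.sum_ite_mem]
    exact Finset.sum_le_sum_of_subset (Finset.inter_subset_right)
  have hsum3 : ∑ x ∈ X \ Y, (G.neighborFinset x ∩ (X ∩ Y)).card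
      ≤ ∑ z ∈ X ∩ Y, (G.neighborFinset z \ Y).card := by
    rw [double_count]
    refine Finset.sum_le_sum fun z _ => Finset.card_le_card ?_
    intro w hw
    have hw' := Finset.mem_inter.mp hw
    exact Finset.mem_sdiff.mpr ⟨hw'.1, (Finset.mem_sdiff.mp hw'.2).2⟩
  have hqX := sum_piece' q X Y
  have hqY := sum_piece' q Y X
  rw [Finset.inter_comm] at hqY
  have hNX := sum_piece' (fun x => (G.neighborFinset x \ Y).card) X Y
  rw [← hT1] at hcq
  rw [← hS] at hqY
  omega


lemma inc_image (G : SimpleGraph V) [DecidableRel G.Adj] (x : V) :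
    G.incidenceFinset x = (G.neighborFinset x).image (fun v => s(x,v)) := by
  ext e
  refine e.ind (fun u v => ?_)
  simp only [SimpleGraph.mem_incidenceFinset, Finset.mem_image, SimpleGraph.mem_neighborFinset,
    SimpleGraph.mk'_mem_incidenceSet_iff]
  constructor
  · rintro ⟨hadj, rfl | rfl⟩
    · exact ⟨v, hadj, rfl⟩
    · exact ⟨u, hadj.symm, Sym2.eq_swap⟩
  · rintro ⟨w, hadj, he⟩
    rw [Sym2.eq_iff] at he
    rcases he with ⟨rfl, rfl⟩ | ⟨rfl, rfl⟩
    · exact ⟨hadj, Or.inl rfl⟩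
    · exact ⟨hadj.symm, Or.inr rfl⟩

lemma sum_inc (G : SimpleGraph V) [DecidableRel G.Adj] (x : V) (h : Sym2 V → ℝ) :
    ∑ e ∈ G.incidenceFinset x, h e = ∑ v ∈ G.neighborFinset x, h s(x,v) := by
  rw [inc_image, Finset.sum_image]
  intro u _ v _ huv
  exact Sym2.congr_right.mp huv

lemma gen_sum_piece {β : Type} [AddCommMonoid β] (f : V → β) (X1 X2 : Finset V) :
    ∑ x ∈ X1, f x = ∑ x ∈ X1 ∩ X2, f x + ∑ x ∈ X1 \ X2, f x := by
  have hu : X1 ∩ X2 ∪ X1 \ X2 = X1 := by ext z; simp; tauto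
  have hd : Disjoint (X1 ∩ X2) (X1 \ X2) := by
    rw [Finset.disjoint_left]; intro z h1 h2
    exact (Finset.mem_sdiff.mp h2).2 (Finset.mem_inter.mp h1).2
  have h := Finset.sum_union hd (f := f)
  rw [hu] at h
  exact h

set_option maxHeartbeats 1000000 in
lemma build_factor (G : SimpleGraph V) [DecidableRel G.Adj] (q : V → ℕ)
    (hpair : ∀ X Y : Finset V,
      ∑ x ∈ X, q x ≤ ∑ y ∈ Y, q y + ∑ x ∈ X, (G.neighborFinset x \ Y).card) :
    ∃ h, IsFracFactor G q q h := by
  classical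
  obtain ⟨M, hMA, hMcard, hMcol⟩ := transport (∑ x, q x) (fun v => G.neighborFinset v) q q rfl rfl
    (fun X Y => by have h := hpair X Y; rw [asum]; exact h)
  refine ⟨Sym2.lift ⟨fun u v => ((if v ∈ M u then (1:ℝ) else 0) + (if u ∈ M v then (1:ℝ) else 0)) / 2,
    fun u v => by dsimp only; rw [add_comm]⟩, ?_, ?_⟩
  · intro e _
    refine e.ind (fun u v => ?_)
    rw [Sym2.lift_mk]
    dsimp only
    constructor
    · positivity
    · split_ifs <;> norm_num
  · intro x
    have hkey : ∑ e ∈ G.incidenceFinset x, Sym2.lift ⟨fun u v =>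
        ((if v ∈ M u then (1:ℝ) else 0) + (if u ∈ M v then (1:ℝ) else 0)) / 2,
        fun u v => by dsimp only; rw [add_comm]⟩ e = (q x : ℝ) := by
      rw [sum_inc]
      have hsimp : ∀ v ∈ G.neighborFinset x, Sym2.lift ⟨fun u v =>
          ((if v ∈ M u then (1:ℝ) else 0) + (if u ∈ M v then (1:ℝ) else 0)) / 2,
          fun u v => by dsimp only; rw [add_comm]⟩ s(x,v)
          = ((if v ∈ M x then (1:ℝ) else 0) + (if x ∈ M v then (1:ℝ) else 0)) / 2 :=
        fun v _ => by rw [Sym2.lift_mk]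
      rw [Finset.sum_congr rfl hsimp]
      have e1 : ∑ v ∈ G.neighborFinset x, (if v ∈ M x then (1:ℝ) else 0) = (M x).card := by
        rw [Finset.sum_ite_mem, Finset.inter_eq_right.mpr (hMA x), Finset.sum_const]
        simp
      have e2 : ∑ v ∈ G.neighborFinset x, (if x ∈ M v then (1:ℝ) else 0)
          = ((univ.filter (fun v => x ∈ M v)).card : ℝ) := by
        have hfe : (G.neighborFinset x).filter (fun v => x ∈ M v)
            = univ.filter (fun v => x ∈ M v) := by
          ext v
          simp only [Finset.mem_filter, Finset.mem_univ, true_and,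
            SimpleGraph.mem_neighborFinset]
          constructor
          · rintro ⟨_, hm⟩; exact hm
          · intro hm
            have hmm := hMA v hm
            rw [SimpleGraph.mem_neighborFinset] at hmm
            exact ⟨hmm.symm, hm⟩
        rw [Finset.sum_boole, hfe]
      rw [← Finset.sum_div, Finset.sum_add_distrib, e1, e2, hMcard x, hMcol x]
      ring
    rw [hkey]
    exact ⟨le_refl _, le_refl _⟩

lemma necessity (G : SimpleGraph V) [DecidableRel G.Adj] (a b : ℕ) (hab : a ≤ b)
    (hall : ∀ q : V → ℕ, (∀ v, a ≤ q v) → (∀ v, q v ≤ b) → ∃ h, IsFracFactor G q q h)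
    (S : Finset V) :
    0 ≤ (a : ℤ) * S.card - (b : ℤ) * (Tset G (fun _ => b) S).card +
        ∑ v ∈ Tset G (fun _ => b) S, (dOut G S v : ℤ) := by
  classical
  set T := Tset G (fun _ => b) S with hT
  set q : V → ℕ := fun v => if v ∈ S then a else b with hq
  obtain ⟨h, hbd, hdeg⟩ := hall q (fun v => by by_cases hv : v ∈ S <;> simp [hq, hv, hab])
    (fun v => by by_cases hv : v ∈ S <;> simp [hq, hv, hab])
  have hedge : ∀ x v, v ∈ G.neighborFinset x → (0 ≤ h s(x,v) ∧ h s(x,v) ≤ 1) := by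
    intro x v hv
    refine hbd _ ?_
    rw [SimpleGraph.mem_edgeFinset, SimpleGraph.mem_edgeSet]
    exact (SimpleGraph.mem_neighborFinset _ _ _).mp hv
  have hdege : ∀ x, ∑ v ∈ G.neighborFinset x, h s(x,v) = (q x : ℝ) := by
    intro x
    rw [← sum_inc]
    exact le_antisymm (hdeg x).2 (hdeg x).1
  have hTS : ∀ x ∈ T, x ∉ S := by
    intro x hx
    have := (Finset.mem_filter.mp hx).1
    simpa using this
  have hb1 : (b : ℝ) * T.card = ∑ x ∈ T, ∑ v ∈ G.neighborFinset x, h s(x,v) := by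
    calc (b:ℝ) * T.card = ∑ _x ∈ T, (b:ℝ) := by rw [Finset.sum_const, nsmul_eq_mul, mul_comm]
    _ = ∑ x ∈ T, (q x : ℝ) := Finset.sum_congr rfl fun x hx => by simp [hq, hTS x hx]
    _ = ∑ x ∈ T, ∑ v ∈ G.neighborFinset x, h s(x,v) :=
        Finset.sum_congr rfl fun x _ => (hdege x).symm
  have hsplit : ∀ x, ∑ v ∈ G.neighborFinset x, h s(x,v)
      = ∑ v ∈ G.neighborFinset x ∩ S, h s(x,v) + ∑ v ∈ G.neighborFinset x \ S, h s(x,v) :=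
    fun x => gen_sum_piece _ _ S
  have hb2 : ∀ x ∈ T, ∑ v ∈ G.neighborFinset x \ S, h s(x,v) ≤ (dOut G S x : ℝ) := by
    intro x _
    have hle := Finset.sum_le_card_nsmul (G.neighborFinset x \ S) (fun v => h s(x,v)) 1
      (fun v hv => (hedge x v (Finset.mem_sdiff.mp hv).1).2)
    simpa [dOut] using hle
  have hcross : ∑ x ∈ T, ∑ v ∈ G.neighborFinset x ∩ S, h s(x,v) ≤ (a:ℝ) * S.card := by
    have step1 : ∑ x ∈ T, ∑ v ∈ G.neighborFinset x ∩ S, h s(x,v)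
        = ∑ v ∈ S, ∑ x ∈ T, (if v ∈ G.neighborFinset x then h s(x,v) else 0) := by
      rw [Finset.sum_comm]
      refine Finset.sum_congr rfl fun x _ => ?_
      rw [Finset.sum_ite_mem, Finset.inter_comm]
    have step2 : ∀ v ∈ S, ∑ x ∈ T, (if v ∈ G.neighborFinset x then h s(x,v) else 0) ≤ (q v : ℝ) := by
      intro v hv
      have e : ∑ x ∈ T, (if v ∈ G.neighborFinset x then h s(x,v) else 0)
          = ∑ x ∈ G.neighborFinset v ∩ T, h s(v,x) := by
        have hcongr : ∀ x ∈ T, (if v ∈ G.neighborFinset x then h s(x,v) else 0)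
            = (if x ∈ G.neighborFinset v then h s(v,x) else 0) := by
          intro x _
          have hiff : v ∈ G.neighborFinset x ↔ x ∈ G.neighborFinset v := by
            simp [SimpleGraph.mem_neighborFinset, G.adj_comm]
          have hsw : h s(x,v) = h s(v,x) := by rw [Sym2.eq_swap]
          by_cases hc : v ∈ G.neighborFinset x
          · rw [if_pos hc, if_pos (hiff.mp hc), hsw]
          · rw [if_neg hc, if_neg (fun hcc => hc (hiff.mpr hcc))]
        rw [Finset.sum_congr rfl hcongr, Finset.sum_ite_mem, Finset.inter_comm]
      rw [e]
      have hsub : ∑ x ∈ G.neighborFinset v ∩ T, h s(v,x) ≤ ∑ x ∈ G.neighborFinset v, h s(v,x) :=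
        Finset.sum_le_sum_of_subset_of_nonneg Finset.inter_subset_left
          (fun x hx _ => (hedge v x hx).1)
      exact hsub.trans (le_of_eq (hdege v))
    calc ∑ x ∈ T, ∑ v ∈ G.neighborFinset x ∩ S, h s(x,v)
        = ∑ v ∈ S, ∑ x ∈ T, (if v ∈ G.neighborFinset x then h s(x,v) else 0) := step1
      _ ≤ ∑ v ∈ S, (q v : ℝ) := Finset.sum_le_sum step2
      _ = (a:ℝ) * S.card := by
          rw [Finset.sum_congr rfl (fun v hv => by simp [hq, hv] : ∀ v ∈ S, ((q v : ℝ) = (a:ℝ)))]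
          rw [Finset.sum_const, nsmul_eq_mul, mul_comm]
  have hreal : (b:ℝ) * T.card ≤ (a:ℝ) * S.card + ∑ x ∈ T, (dOut G S x : ℝ) := by
    rw [hb1, Finset.sum_congr rfl (fun x _ => hsplit x), Finset.sum_add_distrib]
    have h2 := Finset.sum_le_sum hb2
    linarith [hcross, h2]
  have hnat : b * T.card ≤ a * S.card + ∑ x ∈ T, dOut G S x := by
    have hcast : ((b * T.card : ℕ) : ℝ) ≤ ((a * S.card + ∑ x ∈ T, dOut G S x : ℕ) : ℝ) := by
      push_cast
      linarith [hreal]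
    exact_mod_cast hcast
  have hZ : ((b * T.card : ℕ) : ℤ) ≤ ((a * S.card + ∑ x ∈ T, dOut G S x : ℕ) : ℤ) :=
    Int.ofNat_le.mpr hnat
  push_cast at hZ
  linarith

end Aux

/-- **Corollary 6.** For positive integers `a < b`, `G` has all fractional `[a,b]`-factors
iff for every `S ⊆ V(G)`, `a|S| − b|T| + Σ_{x∈T} d_{G−S}(x) ≥ 0`, where
`T = {v ∈ V(G)−S : d_{G−S}(v) < b}`. -/
theorem all_fractional_ab_factors_iff {V : Type*} [Fintype V] [DecidableEq V]
    (G : SimpleGraph V) [DecidableRel G.Adj] (a b : ℕ) (ha : 0 < a) (hab : a < b) :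
    HasAllFracFactors G (fun _ => a) (fun _ => b) ↔
      ∀ S : Finset V,
        0 ≤ (a : ℤ) * S.card - (b : ℤ) * (Tset G (fun _ => b) S).card +
            ∑ v ∈ Tset G (fun _ => b) S, (dOut G S v : ℤ) := by
  constructor
  · intro hall
    exact necessity G a b hab.le hall
  · intro hcond q haq hqb
    exact build_factor G q (fun X Y => pairform G a b hcond q haq hqb X Y)
end

section
/- Let a < b be positive integers and let G be a finite simple graph of order n with n ≥ 2(a+b)(a+b−1)/a and minimum degree δ(G) ≥ ((a+b−1)² + 4b)/(4a), such that |N_G(u) ∪ N_G(v)| ≥ bn/(a+b) for every pair of nonadjacent vertices u, v. Then for every subset S ⊆ V(G), one has a·|S| − b·|T| + Σ_{x∈T} d_{G−S}(x) ≥ 0, where T = {v ∈ V(G) − S : d_{G−S}(v) < b}. -/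
open Finset

set_option maxHeartbeats 2000000 in
/-- Under the hypotheses of Theorem 7, the criterion of Corollary 6 holds: for every
`S ⊆ V(G)`, `a|S| − b|T| + Σ_{x∈T} d_{G−S}(x) ≥ 0`, where
`T = {v ∈ V(G)−S : d_{G−S}(v) < b}`. -/
theorem criterion_of_neighborhood_union {V : Type*} [Fintype V]
    [DecidableEq V] (G : SimpleGraph V) [DecidableRel G.Adj] (a b : ℕ)
    (ha : 0 < a) (hab : a < b)
    (hn : (Fintype.card V : ℝ) ≥ 2 * ((a : ℝ) + b) * ((a : ℝ) + b - 1) / a)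
    (hδ : (G.minDegree : ℝ) ≥ (((a : ℝ) + b - 1) ^ 2 + 4 * b) / (4 * a))
    (hnb : ∀ u v : V, u ≠ v → ¬ G.Adj u v →
      (((G.neighborFinset u ∪ G.neighborFinset v).card : ℝ)) ≥
        (b : ℝ) * (Fintype.card V) / ((a : ℝ) + b)) :
    ∀ S : Finset V,
      0 ≤ (a : ℤ) * S.card - (b : ℤ) * (Tset G (fun _ => b) S).card +
          ∑ v ∈ Tset G (fun _ => b) S, (dOut G S v : ℤ) := by
  intro S
  by_contra hc
  push_neg at hc
  set T := Tset G (fun _ => b) S with hTdef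
  have hApos : (0:ℝ) < (a:ℝ) := by exact_mod_cast ha
  have hBpos : (0:ℝ) < (b:ℝ) := by exact_mod_cast ha.trans hab
  have hABpos : (0:ℝ) < (a:ℝ) + b := by linarith
  have hab' : (a:ℝ) + 1 ≤ (b:ℝ) := by exact_mod_cast hab
  -- T is nonempty
  have hTne : T.Nonempty := by
    by_contra h
    rw [Finset.not_nonempty_iff_eq_empty] at h
    rw [h] at hc
    simp at hc
    exact absurd hc (not_lt.mpr (by positivity))
  obtain ⟨x1, hx1T, hx1min⟩ := T.exists_min_image (fun x => dOut G S x) hTne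
  have : Nonempty V := ⟨x1⟩
  have hx1mem : x1 ∉ S ∧ dOut G S x1 < b := by
    have h := hx1T
    rw [hTdef, Tset, Finset.mem_filter, Finset.mem_compl] at h
    exact h
  set d1 := dOut G S x1 with hd1def
  have hd1b : d1 < b := hx1mem.2
  -- |S| ≥ δ − d1
  have hdeg : G.minDegree ≤ d1 + S.card := by
    have h1 : G.minDegree ≤ G.degree x1 := G.minDegree_le_degree x1
    have h2 : (G.neighborFinset x1).card ≤ (G.neighborFinset x1 \ S).card + S.card :=
      Finset.card_le_card_sdiff_add_card
    have h3 : G.degree x1 = (G.neighborFinset x1).card := rfl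
    have : (G.neighborFinset x1 \ S).card = d1 := rfl
    omega
  by_cases hA : ∀ x ∈ T, x ≠ x1 → G.Adj x1 x
  · -- Case A : every vertex of T is adjacent to x1, so |T| ≤ d1 + 1
    have hTsub : T ⊆ insert x1 (G.neighborFinset x1 \ S) := by
      intro x hx
      by_cases hxx : x = x1
      · simp [hxx]
      · have hadj := hA x hx hxx
        have hxS : x ∉ S := by
          rw [hTdef, Tset, Finset.mem_filter, Finset.mem_compl] at hx; exact hx.1
        exact Finset.mem_insert_of_mem
          (Finset.mem_sdiff.mpr ⟨(G.mem_neighborFinset x1 x).mpr hadj, hxS⟩)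
    have hTcard : T.card ≤ d1 + 1 := by
      calc T.card ≤ (insert x1 (G.neighborFinset x1 \ S)).card := Finset.card_le_card hTsub
        _ ≤ (G.neighborFinset x1 \ S).card + 1 := Finset.card_insert_le _ _
        _ = d1 + 1 := rfl
    have hsum : (T.card : ℤ) * (d1:ℤ) ≤ ∑ v ∈ T, (dOut G S v : ℤ) := by
      have h := Finset.card_nsmul_le_sum T (fun v => (dOut G S v : ℤ)) (d1:ℤ)
        (fun x hx => Int.ofNat_le.mpr (hx1min x hx))
      simpa [nsmul_eq_mul] using h
    have hmain : (a:ℤ) * S.card + ((d1:ℤ) - b) * T.card < 0 := by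
      have := hc; nlinarith [hsum]
    have hstep : ((d1:ℤ) - b) * ((d1:ℤ) + 1) ≤ ((d1:ℤ) - b) * T.card := by
      apply mul_le_mul_of_nonpos_left _ (by omega : (d1:ℤ) - b ≤ 0)
      exact_mod_cast hTcard
    have h2 : (a:ℤ) * S.card + ((d1:ℤ) - b) * ((d1:ℤ) + 1) < 0 := by linarith
    -- move to ℝ
    have hR : (a:ℝ) * S.card + ((d1:ℝ) - b) * ((d1:ℝ) + 1) < 0 := by exact_mod_cast h2
    have hsR : (G.minDegree : ℝ) ≤ (d1:ℝ) + S.card := by exact_mod_cast hdeg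
    have hδ' : ((a:ℝ) + b - 1) ^ 2 + 4 * b ≤ (G.minDegree : ℝ) * (4 * a) := by
      rw [ge_iff_le, div_le_iff₀ (by positivity)] at hδ; exact hδ
    nlinarith [sq_nonneg (2 * (d1:ℝ) - ((a:ℝ) + b - 1)),
      mul_nonneg hApos.le (by linarith : (0:ℝ) ≤ (d1:ℝ) + S.card - G.minDegree)]
  · -- Case B : there is x2 ∈ T nonadjacent to x1
    push_neg at hA
    set p : V → Prop := fun x => x = x1 ∨ G.Adj x1 x with hpdef
    have hpdec : DecidablePred p := fun x => inferInstanceAs (Decidable (_ ∨ _))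
    set T1 := T.filter p with hT1def
    set T2 := T.filter (fun x => ¬ p x) with hT2def
    have hT2ne : T2.Nonempty := by
      obtain ⟨x, hxT, hxne, hxadj⟩ := hA
      exact ⟨x, Finset.mem_filter.mpr ⟨hxT, by simp [hpdef, hxne, hxadj]⟩⟩
    obtain ⟨x2, hx2T2, hx2min⟩ := T2.exists_min_image (fun x => dOut G S x) hT2ne
    have hx2T : x2 ∈ T := (Finset.mem_filter.mp hx2T2).1
    have hx2p : ¬ p x2 := (Finset.mem_filter.mp hx2T2).2
    have hne12 : x1 ≠ x2 := fun h => hx2p (Or.inl h.symm)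
    have hnadj : ¬ G.Adj x1 x2 := fun h => hx2p (Or.inr h)
    set d2 := dOut G S x2 with hd2def
    have hd12 : d1 ≤ d2 := hx1min x2 hx2T
    have hd2b : d2 < b := by
      have h := hx2T
      rw [hTdef, Tset, Finset.mem_filter] at h
      exact h.2
    -- neighborhood union bound
    have hWcard : (G.neighborFinset x1 ∪ G.neighborFinset x2).card ≤ d1 + d2 + S.card := by
      have hWsub : G.neighborFinset x1 ∪ G.neighborFinset x2 ⊆
          (G.neighborFinset x1 \ S) ∪ ((G.neighborFinset x2 \ S) ∪ S) := by
        intro y hy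
        by_cases hyS : y ∈ S
        · exact Finset.mem_union_right _ (Finset.mem_union_right _ hyS)
        · rcases Finset.mem_union.mp hy with h | h
          · exact Finset.mem_union_left _ (Finset.mem_sdiff.mpr ⟨h, hyS⟩)
          · exact Finset.mem_union_right _
              (Finset.mem_union_left _ (Finset.mem_sdiff.mpr ⟨h, hyS⟩))
      calc (G.neighborFinset x1 ∪ G.neighborFinset x2).card
          ≤ ((G.neighborFinset x1 \ S) ∪ ((G.neighborFinset x2 \ S) ∪ S)).card :=
            Finset.card_le_card hWsub
        _ ≤ (G.neighborFinset x1 \ S).card + ((G.neighborFinset x2 \ S) ∪ S).card :=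
            Finset.card_union_le _ _
        _ ≤ (G.neighborFinset x1 \ S).card + ((G.neighborFinset x2 \ S).card + S.card) := by
            have := Finset.card_union_le (G.neighborFinset x2 \ S) S; omega
        _ = d1 + d2 + S.card := (Nat.add_assoc d1 d2 S.card).symm
    have hnb12 := hnb x1 x2 hne12 hnadj
    -- |T1| ≤ d1 + 1
    have hT1sub : T1 ⊆ insert x1 (G.neighborFinset x1 \ S) := by
      intro x hx
      obtain ⟨hxT, hxp⟩ := Finset.mem_filter.mp hx
      rcases hxp with h | h
      · simp [h]
      · have hxS : x ∉ S := by
          rw [hTdef, Tset, Finset.mem_filter, Finset.mem_compl] at hxT; exact hxT.1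
        exact Finset.mem_insert_of_mem
          (Finset.mem_sdiff.mpr ⟨(G.mem_neighborFinset x1 x).mpr h, hxS⟩)
    have hT1card : T1.card ≤ d1 + 1 := by
      calc T1.card ≤ (insert x1 (G.neighborFinset x1 \ S)).card := Finset.card_le_card hT1sub
        _ ≤ (G.neighborFinset x1 \ S).card + 1 := Finset.card_insert_le _ _
        _ = d1 + 1 := rfl
    have hx1T1 : x1 ∈ T1 := Finset.mem_filter.mpr ⟨hx1T, Or.inl rfl⟩
    have hT1pos : 1 ≤ T1.card := Finset.card_pos.mpr ⟨x1, hx1T1⟩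
    -- cards
    have hcards : T1.card + T2.card = T.card :=
      Finset.card_filter_add_card_filter_not (p := p)
    have hTcompl : T.card + S.card ≤ Fintype.card V := by
      have hsub : T ⊆ Sᶜ := by rw [hTdef, Tset]; exact Finset.filter_subset _ _
      have := Finset.card_le_card hsub
      have := Finset.card_compl_add_card S
      omega
    -- sum bounds
    have hsplit : ∑ v ∈ T, (dOut G S v : ℤ)
        = ∑ v ∈ T1, (dOut G S v : ℤ) + ∑ v ∈ T2, (dOut G S v : ℤ) :=
      (Finset.sum_filter_add_sum_filter_not T p _).symm
    have hb1 : (T1.card : ℤ) * (d1:ℤ) ≤ ∑ v ∈ T1, (dOut G S v : ℤ) := by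
      have h := Finset.card_nsmul_le_sum T1 (fun v => (dOut G S v : ℤ)) (d1:ℤ)
        (fun x hx => Int.ofNat_le.mpr (hx1min x (Finset.mem_filter.mp hx).1))
      simpa [nsmul_eq_mul] using h
    have hb2 : (T2.card : ℤ) * (d2:ℤ) ≤ ∑ v ∈ T2, (dOut G S v : ℤ) := by
      have h := Finset.card_nsmul_le_sum T2 (fun v => (dOut G S v : ℤ)) (d2:ℤ)
        (fun x hx => Int.ofNat_le.mpr (hx2min x hx))
      simpa [nsmul_eq_mul] using h
    have hcZ : ((T1.card : ℤ) + T2.card) = (T.card : ℤ) := by exact_mod_cast hcards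
    have hmainZ : (a:ℤ) * S.card + ((d1:ℤ) - b) * T1.card + ((d2:ℤ) - b) * T2.card < 0 := by
      rw [hsplit] at hc
      nlinarith [hb1, hb2]
    -- now move everything to ℝ
    have H1 : (a:ℝ) * S.card + ((d1:ℝ) - b) * T1.card + ((d2:ℝ) - b) * T2.card < 0 := by
      exact_mod_cast hmainZ
    have Ht1 : (T1.card:ℝ) ≤ (d1:ℝ) + 1 := by exact_mod_cast hT1card
    have Ht1' : (1:ℝ) ≤ (T1.card:ℝ) := by exact_mod_cast hT1pos
    have Hsum : (T1.card:ℝ) + T2.card ≤ (Fintype.card V : ℝ) - S.card := by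
      have : ((T1.card : ℝ) + T2.card) + S.card ≤ (Fintype.card V : ℝ) := by
        exact_mod_cast (by omega : T1.card + T2.card + S.card ≤ Fintype.card V)
      linarith
    have He : (d1:ℝ) ≤ (d2:ℝ) := by exact_mod_cast hd12
    have He2 : (d2:ℝ) ≤ (b:ℝ) - 1 := by
      have : (d2:ℝ) + 1 ≤ b := by exact_mod_cast hd2b
      linarith
    have He1 : (0:ℝ) ≤ (d1:ℝ) := Nat.cast_nonneg _
    have Ht2 : (0:ℝ) ≤ (T2.card:ℝ) := Nat.cast_nonneg _
    have Hs : (0:ℝ) ≤ (S.card:ℝ) := Nat.cast_nonneg _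
    have HS : (b:ℝ) * (Fintype.card V) ≤ ((a:ℝ) + b) * ((S.card:ℝ) + d1 + d2) := by
      have hW : ((G.neighborFinset x1 ∪ G.neighborFinset x2).card : ℝ)
          ≤ (d1:ℝ) + d2 + S.card := by exact_mod_cast hWcard
      rw [ge_iff_le, div_le_iff₀ hABpos] at hnb12
      have h2 := mul_le_mul_of_nonneg_right hW hABpos.le
      calc (b:ℝ) * (Fintype.card V) ≤ _ := hnb12
        _ ≤ ((d1:ℝ) + d2 + S.card) * ((a:ℝ) + b) := h2
        _ = ((a:ℝ) + b) * ((S.card:ℝ) + d1 + d2) := by ring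
    have Hn : 2 * ((a:ℝ) + b) * ((a:ℝ) + b - 1) ≤ (a:ℝ) * (Fintype.card V) := by
      rw [ge_iff_le, div_le_iff₀ hApos] at hn
      linarith [hn]
    clear_value d1 d2 T T1 T2
    clear hc hmainZ hb1 hb2 hsplit hcZ hcards hTcompl hT1card hT1pos hx1T1 hT1sub
    clear hnb12 hWcard hd12 hd2b hdeg hx1min hx2min hd1b hx1mem hx2T2 hx2T hx2p hT2ne hTne hA
    clear hn hδ hnb hd1def hd2def hT1def hT2def hTdef
    have hd12 : d1 ≤ d2 := by exact_mod_cast He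
    have Hkey : (1:ℝ) ≤ ((d1:ℝ) - 1) ^ 2 + ((d2:ℝ)) ^ 2 := by
      rcases Nat.eq_zero_or_pos d2 with h | h
      · have h1 : d1 = 0 := by omega
        rw [h1, h]; norm_num
      · have h2 : (1:ℝ) ≤ (d2:ℝ) := by exact_mod_cast h
        nlinarith [sq_nonneg ((d1:ℝ) - 1)]
    have hA1 : (1:ℝ) ≤ (a:ℝ) := by exact_mod_cast ha
    set nR : ℝ := (Fintype.card V : ℝ) with hnRdef
    set s : ℝ := ((S.card:ℕ) : ℝ) with hsdef
    set t1 : ℝ := ((T1.card:ℕ) : ℝ) with ht1def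
    set t2 : ℝ := ((T2.card:ℕ) : ℝ) with ht2def
    set e1 : ℝ := ((d1:ℕ) : ℝ) with he1def
    set e2 : ℝ := ((d2:ℕ) : ℝ) with he2def
    set A : ℝ := ((a:ℕ) : ℝ) with hAdef
    set B : ℝ := ((b:ℕ) : ℝ) with hBdef
    clear_value nR s t1 t2 e1 e2 A B
    -- key chain
    have step1 : (e2 - B) * (nR - s - t1) ≤ (e2 - B) * t2 :=
      mul_le_mul_of_nonpos_left (by linarith) (by linarith)
    have step2 : (e1 - e2) * (e1 + 1) ≤ (e1 - e2) * t1 :=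
      mul_le_mul_of_nonpos_left Ht1 (by linarith)
    have key1 : (A + B - e2) * s + (e1 - e2) * (e1 + 1) + (e2 - B) * nR < 0 := by
      nlinarith [H1, step1, step2]
    have hs' : B * nR - (e1 + e2) * (A + B) ≤ (A + B) * s := by nlinarith [HS]
    have step4 : (A + B - e2) * (B * nR - (e1 + e2) * (A + B))
        ≤ (A + B - e2) * ((A + B) * s) :=
      mul_le_mul_of_nonneg_left hs' (by linarith)
    have key2 : (A + B) * ((A + B - e2) * s + (e1 - e2) * (e1 + 1) + (e2 - B) * nR) < 0 :=
      by nlinarith [key1]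
    have key3 : A * e2 * nR + (A + B) * ((e1 - e2) * (e1 + 1) - (e1 + e2) * (A + B - e2))
        < 0 := by nlinarith [key2, step4]
    have He2n : 0 ≤ e2 := by linarith
    have step5 : 2 * (A + B) * (A + B - 1) * e2 ≤ A * nR * e2 :=
      mul_le_mul_of_nonneg_right Hn He2n
    have key4 : 2 * (A + B) * (A + B - 1) * e2
        + (A + B) * ((e1 - e2) * (e1 + 1) - (e1 + e2) * (A + B - e2)) < 0 := by
      nlinarith [key3, step5]
    -- final elementary inequality
    have h_main : 0 ≤ 2 * (A + B - 1) * e2 + ((e1 - e2) * (e1 + 1) - (e1 + e2) * (A + B - e2)) := by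
      nlinarith [mul_nonneg (by linarith : (0:ℝ) ≤ A + B - 3) (by linarith : (0:ℝ) ≤ e2 - e1), Hkey]
    nlinarith [mul_le_mul_of_nonneg_left h_main hABpos.le, key4]
end

section
/- (Zhang) Let G be a finite simple graph and g, f : V(G) → ℕ with g ≤ f pointwise. If G has a fractional (g,f)-factor, then G has a fractional (g,f)-factor whose indicator function h satisfies h(e) ∈ {0, 1/2, 1} for every edge e ∈ E(G). -/
/-!
Pass to the bipartite double cover: weighting each dart `d` of `G` by `h d.edge` gives a point
of the polytope cut out by `0 ≤ z ≤ 1` on the darts and `g v ≤ ∑ z ≤ f v` both on the darts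
leaving `v` and on the darts entering `v`. These are the constraints of a bipartite
transportation problem with integer bounds, so the polytope also contains an integral point `z`,
and averaging `z` over the two darts of each edge gives the required factor.

The integral point is reached by moving, as far as feasibility allows, along a direction that
fixes every constraint value that is already an integer; each move makes one more value integral.
Such a direction exists by a dimension count: a row or column with integral sum that contains a
nonintegral entry contains at least two, so there are at most as many such rows and columns as
nonintegral entries, and in the case of equality every nonintegral entry lies in one of them, so
that one row constraint follows from the others.
-/

open Finset

noncomputable def maxStep (lo hi a δ : ℝ) : ℝ := ((if 0 < δ then hi else lo) - a) / δ

lemma maxStep_pos {lo hi a δ : ℝ} (hlo : lo < a) (hhi : a < hi) (hδ : δ ≠ 0) :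
    0 < maxStep lo hi a δ := by
  unfold maxStep
  split_ifs with h
  · exact div_pos (by linarith) h
  · exact div_pos_of_neg_of_neg (by linarith) (lt_of_le_of_ne (not_lt.1 h) hδ)

lemma add_mul_mem_Icc_of_le_maxStep {lo hi a δ t : ℝ} (ha : lo ≤ a ∧ a ≤ hi) (ht : 0 ≤ t)
    (hδ : δ ≠ 0) (hstep : t ≤ maxStep lo hi a δ) : lo ≤ a + t * δ ∧ a + t * δ ≤ hi := by
  unfold maxStep at hstep
  split_ifs at hstep with h
  · rw [le_div_iff₀ h] at hstep
    constructor <;> nlinarith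
  · have h' : δ < 0 := lt_of_le_of_ne (not_lt.1 h) hδ
    rw [le_div_iff_of_neg h'] at hstep
    constructor <;> nlinarith

lemma add_maxStep_mul {lo hi a δ : ℝ} (hδ : δ ≠ 0) :
    a + maxStep lo hi a δ * δ = if 0 < δ then hi else lo := by
  unfold maxStep
  field_simp
  ring

lemma exists_ne_zero_forall_mem_eq_zero {E K : Type*} [AddCommGroup E] [Module ℝ E]
    [FiniteDimensional ℝ E] (ℓ : K → E →ₗ[ℝ] ℝ) (T : Finset K)
    (hT : #T < Module.finrank ℝ E) : ∃ d ≠ 0, ∀ k ∈ T, ℓ k d = 0 := by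
  obtain ⟨d, hd, hne⟩ := Submodule.exists_mem_ne_zero_of_ne_bot <|
    LinearMap.ker_ne_bot_of_finrank_lt (f := LinearMap.pi fun k : T => ℓ k) (by simpa)
  exact ⟨d, hne, fun k hk => congr_fun (LinearMap.mem_ker.1 hd) ⟨k, hk⟩⟩

section BoxRounding

open Classical

variable {E K : Type*} [AddCommGroup E] [Module ℝ E] (ℓ : K → E →ₗ[ℝ] ℝ) (lo hi : K → ℤ)

def Feasible (y : E) : Prop := ∀ k, (lo k : ℝ) ≤ ℓ k y ∧ ℓ k y ≤ hi k

variable [Fintype K]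

-- A real is an integer iff it lies in `⊥ : Subring ℝ`, which gives closure under sums for free.
noncomputable def numNonint (y : E) : ℕ := #{k | ℓ k y ∉ (⊥ : Subring ℝ)}

variable {ℓ lo hi}

lemma exists_feasible_numNonint_lt {y d : E} (hy : Feasible ℓ lo hi y) (hd : ∃ k, ℓ k d ≠ 0)
    (hyd : ∀ k, ℓ k y ∈ (⊥ : Subring ℝ) → ℓ k d = 0) :
    ∃ y', Feasible ℓ lo hi y' ∧ numNonint ℓ y' < numNonint ℓ y := by
  set step := fun k => maxStep (lo k) (hi k) (ℓ k y) (ℓ k d)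
  obtain ⟨k₀, hk₀, hmin⟩ := exists_min_image {k | ℓ k d ≠ 0} step <| by
    obtain ⟨k, hk⟩ := hd
    exact ⟨k, by simpa using hk⟩
  have hnonint : ∀ k, ℓ k d ≠ 0 → ℓ k y ∉ (⊥ : Subring ℝ) := fun k hk hy => hk (hyd k hy)
  have hstep_pos : ∀ k, ℓ k d ≠ 0 → 0 < step k := fun k hk =>
    maxStep_pos ((hy k).1.lt_of_ne fun h => hnonint k hk (h ▸ intCast_mem _ _))
      ((hy k).2.lt_of_ne fun h => hnonint k hk (h ▸ intCast_mem _ _)) hk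
  simp only [mem_filter, mem_univ, true_and] at hk₀ hmin
  have happly : ∀ k, ℓ k (y + step k₀ • d) = ℓ k y + step k₀ * ℓ k d := by simp
  refine ⟨y + step k₀ • d, fun k => ?_, card_lt_card ?_⟩
  · rw [happly]
    by_cases hk : ℓ k d = 0
    · simpa [hk] using hy k
    · exact add_mul_mem_Icc_of_le_maxStep (hy k) (hstep_pos k₀ hk₀).le hk (hmin k hk)
  · refine (ssubset_iff_of_subset (monotone_filter_right _ fun k _ hk hint => ?_)).2
      ⟨k₀, by simpa using hnonint k₀ hk₀, ?_⟩
    · rw [happly, hyd k hint, mul_zero, add_zero] at hk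
      exact hk hint
    · simp only [mem_filter, mem_univ, true_and, not_not, happly, step, add_maxStep_mul hk₀]
      split_ifs <;> exact intCast_mem _ _

theorem exists_feasible_integral_of_exists_direction
    (hdir : ∀ y : E, (∃ k, ℓ k y ∉ (⊥ : Subring ℝ)) →
      ∃ d, (∃ k, ℓ k d ≠ 0) ∧ ∀ k, ℓ k y ∈ (⊥ : Subring ℝ) → ℓ k d = 0)
    {y : E} (hy : Feasible ℓ lo hi y) :
    ∃ z, Feasible ℓ lo hi z ∧ ∀ k, ℓ k z ∈ (⊥ : Subring ℝ) := by
  induction hn : numNonint ℓ y using Nat.strong_induction_on generalizing y with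
  | _ n ih =>
    by_cases hint : ∀ k, ℓ k y ∈ (⊥ : Subring ℝ)
    · exact ⟨y, hy, hint⟩
    simp only [not_forall] at hint
    obtain ⟨d, hd, hyd⟩ := hdir y hint
    obtain ⟨y', hy', hlt⟩ := exists_feasible_numNonint_lt hy hd hyd
    exact ih _ (hn ▸ hlt) hy' rfl

end BoxRounding

section Bipartite

variable {ι P R C : Type*} [Fintype ι] [DecidableEq P] [DecidableEq R] [DecidableEq C]

def fiberSum (p : ι → P) (a : P) : (ι → ℝ) →ₗ[ℝ] ℝ := ∑ i with p i = a, LinearMap.proj i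

@[simp]
lemma fiberSum_apply (p : ι → P) (a : P) (y : ι → ℝ) :
    fiberSum p a y = ∑ i with p i = a, y i := by
  simp [fiberSum]

lemma sum_fiberSum_of_forall_ne_zero {p : ι → P} {S : Finset P} {d : ι → ℝ}
    (hd : ∀ i, d i ≠ 0 → p i ∈ S) : ∑ a ∈ S, fiberSum p a d = ∑ i, d i := by
  simp only [fiberSum_apply]
  rw [sum_fiberwise_eq_sum_filter]
  exact sum_filter_of_ne fun i _ => hd i

lemma fiberSum_eq_zero_of_notMem_image {p : ι → P} {F : Finset ι} {d : ι → ℝ}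
    (hd : ∀ i ∉ F, d i = 0) {a : P} (ha : a ∉ F.image p) : fiberSum p a d = 0 := by
  classical
  rw [fiberSum_apply]
  refine sum_eq_zero fun i hi => hd i fun hiF => ha ?_
  rw [(mem_filter.1 hi).2.symm]
  exact mem_image_of_mem p hiF

lemma one_lt_card_fiber_of_mem_bot {F : Finset ι} {y : ι → ℝ}
    (hF : ∀ j ∉ F, y j ∈ (⊥ : Subring ℝ)) {p : ι → P} {i : ι} (hi : y i ∉ (⊥ : Subring ℝ))
    (hint : fiberSum p (p i) y ∈ (⊥ : Subring ℝ)) : 1 < #{j ∈ F | p j = p i} := by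
  classical
  have hiF : i ∈ F := by_contra fun h => hi (hF i h)
  by_contra hcard
  rw [not_lt, card_le_one] at hcard
  have hrest : ∀ j ∈ ({j | p j = p i} : Finset ι).erase i, y j ∈ (⊥ : Subring ℝ) := by
    intro j hj
    obtain ⟨hji, hj⟩ := mem_erase.1 hj
    by_contra hy
    exact hji (hcard j (mem_filter.2 ⟨by_contra fun h => hy (hF j h), (mem_filter.1 hj).2⟩) i
      (mem_filter.2 ⟨hiF, rfl⟩))
  rw [fiberSum_apply, ← add_sum_erase _ _ (by simp : i ∈ ({j | p j = p i} : Finset ι))] at hint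
  exact hi (by simpa using sub_mem hint (sum_mem hrest))

lemma two_mul_card_le_card_filter {F : Finset ι} {y : ι → ℝ}
    (hF : ∀ j ∉ F, y j ∈ (⊥ : Subring ℝ)) {p : ι → P} {T : Finset P}
    (hT : ∀ a ∈ T, fiberSum p a y ∈ (⊥ : Subring ℝ) ∧ ∃ i, y i ∉ (⊥ : Subring ℝ) ∧ p i = a) :
    2 * #T ≤ #{i ∈ F | p i ∈ T} := by
  rw [← sum_card_fiberwise_eq_card_filter, mul_comm, ← smul_eq_mul]
  refine card_nsmul_le_sum _ _ _ fun a ha => ?_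
  obtain ⟨hint, i, hi, rfl⟩ := hT a ha
  exact one_lt_card_fiber_of_mem_bot hF hi hint

def bipartiteForms (r : ι → R) (c : ι → C) : ι ⊕ R ⊕ C → (ι → ℝ) →ₗ[ℝ] ℝ :=
  Sum.elim (LinearMap.proj ·) (Sum.elim (fiberSum r) (fiberSum c))

lemma exists_ne_zero_supported_fiberSum_eq_zero (r : ι → R) (c : ι → C) {F : Finset ι}
    {SR : Finset R} {SC : Finset C} (h : #SR + #SC < #F) :
    ∃ d : ι → ℝ, d ≠ 0 ∧ (∀ i ∉ F, d i = 0) ∧ (∀ a ∈ SR, fiberSum r a d = 0) ∧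
      ∀ b ∈ SC, fiberSum c b d = 0 := by
  classical
  obtain ⟨d, hd, h0⟩ := exists_ne_zero_forall_mem_eq_zero (bipartiteForms r c)
    (Fᶜ.disjSum (SR.disjSum SC)) <| by
      simp only [card_disjSum, card_compl, Module.finrank_fintype_fun_eq_card]
      have := F.card_le_univ
      omega
  exact ⟨d, hd, fun i hi => h0 (.inl i) (by simpa), fun a ha => h0 (.inr (.inl a)) (by simpa),
    fun b hb => h0 (.inr (.inr b)) (by simpa)⟩

lemma exists_ne_zero_supported_fiberSum_eq_zero_of_two_mul_card_le (r : ι → R) (c : ι → C)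
    {F : Finset ι} (hF : F.Nonempty) {SR : Finset R} {SC : Finset C}
    (hSR : 2 * #SR ≤ #{i ∈ F | r i ∈ SR}) (hSC : 2 * #SC ≤ #{i ∈ F | c i ∈ SC}) :
    ∃ d : ι → ℝ, d ≠ 0 ∧ (∀ i ∉ F, d i = 0) ∧ (∀ a ∈ SR, fiberSum r a d = 0) ∧
      ∀ b ∈ SC, fiberSum c b d = 0 := by
  have hFR := card_filter_le F (r · ∈ SR)
  have hFC := card_filter_le F (c · ∈ SC)
  by_cases hcov : ∀ i ∈ F, r i ∈ SR ∧ c i ∈ SC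
  · -- the row sums over `SR` and the column sums over `SC` both add up to `∑ i, d i`
    obtain ⟨i₀, hi₀⟩ := hF
    have ha₀ : r i₀ ∈ SR := (hcov i₀ hi₀).1
    have hSR_pos := card_pos.2 ⟨_, ha₀⟩
    obtain ⟨d, hd, hsupp, hdR, hdC⟩ := exists_ne_zero_supported_fiberSum_eq_zero r c
      (F := F) (SR := SR.erase (r i₀)) (SC := SC) (by rw [card_erase_of_mem ha₀]; omega)
    refine ⟨d, hd, hsupp, fun a ha => ?_, hdC⟩
    rcases eq_or_ne a (r i₀) with rfl | hne
    · have hcovd : ∀ i, d i ≠ 0 → r i ∈ SR ∧ c i ∈ SC := fun i hi =>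
        hcov i (by_contra fun hiF => hi (hsupp i hiF))
      have hrows := sum_fiberSum_of_forall_ne_zero fun i hi => (hcovd i hi).1
      have hcols := sum_fiberSum_of_forall_ne_zero fun i hi => (hcovd i hi).2
      rw [← add_sum_erase _ _ ha₀, sum_eq_zero hdR, add_zero] at hrows
      rw [sum_eq_zero hdC] at hcols
      linarith
    · exact hdR a (mem_erase.2 ⟨hne, ha⟩)
  · simp only [not_forall, not_and_or] at hcov
    obtain ⟨i, hiF, hi⟩ := hcov
    refine exists_ne_zero_supported_fiberSum_eq_zero r c ?_
    rcases hi with hi | hi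
    · have := card_lt_card (filter_ssubset (p := (r · ∈ SR)).2 ⟨i, hiF, hi⟩)
      omega
    · have := card_lt_card (filter_ssubset (p := (c · ∈ SC)).2 ⟨i, hiF, hi⟩)
      omega

lemma exists_direction_bipartite (r : ι → R) (c : ι → C) {y : ι → ℝ}
    (hy : ∃ i, y i ∉ (⊥ : Subring ℝ)) :
    ∃ d : ι → ℝ, d ≠ 0 ∧ (∀ i, y i ∈ (⊥ : Subring ℝ) → d i = 0) ∧
      (∀ a, fiberSum r a y ∈ (⊥ : Subring ℝ) → fiberSum r a d = 0) ∧
      ∀ b, fiberSum c b y ∈ (⊥ : Subring ℝ) → fiberSum c b d = 0 := by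
  classical
  set F : Finset ι := {i | y i ∉ (⊥ : Subring ℝ)}
  have hF : ∀ i ∉ F, y i ∈ (⊥ : Subring ℝ) := by simp [F]
  set TR := {a ∈ F.image r | fiberSum r a y ∈ (⊥ : Subring ℝ)}
  set TC := {b ∈ F.image c | fiberSum c b y ∈ (⊥ : Subring ℝ)}
  have hTR := two_mul_card_le_card_filter hF (p := r) (T := TR) fun a ha => by
    simp only [TR, F, mem_filter, mem_image, mem_univ, true_and] at ha
    exact ⟨ha.2, ha.1⟩
  have hTC := two_mul_card_le_card_filter hF (p := c) (T := TC) fun b hb => by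
    simp only [TC, F, mem_filter, mem_image, mem_univ, true_and] at hb
    exact ⟨hb.2, hb.1⟩
  obtain ⟨d, hd, hsupp, hdR, hdC⟩ :=
    exists_ne_zero_supported_fiberSum_eq_zero_of_two_mul_card_le r c
      (hy.imp fun i hi => by simpa [F] using hi) hTR hTC
  -- `d` is supported on `F`, so it is balanced on the integral fibres that miss `F`
  refine ⟨d, hd, fun i hi => hsupp i (by simpa [F] using hi), fun a ha => ?_, fun b hb => ?_⟩
  · by_cases haT : a ∈ TR
    · exact hdR a haT
    exact fiberSum_eq_zero_of_notMem_image hsupp fun h => haT (mem_filter.2 ⟨h, ha⟩)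
  · by_cases hbT : b ∈ TC
    · exact hdC b hbT
    exact fiberSum_eq_zero_of_notMem_image hsupp fun h => hbT (mem_filter.2 ⟨h, hb⟩)

theorem exists_integral_feasible_bipartite [Fintype R] [Fintype C] (r : ι → R) (c : ι → C)
    {lo hi : ι ⊕ R ⊕ C → ℤ} {y : ι → ℝ} (hy : Feasible (bipartiteForms r c) lo hi y) :
    ∃ z, Feasible (bipartiteForms r c) lo hi z ∧ ∀ i, z i ∈ (⊥ : Subring ℝ) := by
  refine (exists_feasible_integral_of_exists_direction ?_ hy).imp
    fun z hz => ⟨hz.1, fun i => hz.2 (.inl i)⟩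
  intro y hy
  have hcoord : ∃ i, y i ∉ (⊥ : Subring ℝ) := by
    by_contra! h
    obtain ⟨i | a | b, hk⟩ := hy
    · exact hk (h i)
    all_goals exact hk (by simpa [bipartiteForms] using sum_mem fun i _ => h i)
  obtain ⟨d, hd, hdi, hdR, hdC⟩ := exists_direction_bipartite r c hcoord
  obtain ⟨i, hi⟩ := Function.ne_iff.1 hd
  refine ⟨d, ⟨.inl i, hi⟩, ?_⟩
  rintro (i | a | b)
  exacts [hdi i, hdR a, hdC b]

end Bipartite

lemma eq_zero_or_eq_one_of_mem_bot {x : ℝ} (hx : x ∈ (⊥ : Subring ℝ)) (h₀ : 0 ≤ x) (h₁ : x ≤ 1) :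
    x = 0 ∨ x = 1 := by
  obtain ⟨n, rfl⟩ := Subring.mem_bot.1 hx
  have : 0 ≤ n := by exact_mod_cast h₀
  have : n ≤ 1 := by exact_mod_cast h₁
  interval_cases n <;> simp

lemma exists_dart_edge_eq {V : Type*} {G : SimpleGraph V} {e : Sym2 V} (he : e ∈ G.edgeSet) :
    ∃ d : G.Dart, d.edge = e := by
  obtain ⟨v, w⟩ := e
  exact ⟨⟨(v, w), he⟩, rfl⟩

def dartBounds {V : Type*} (G : SimpleGraph V) (b : ℤ) (g : V → ℕ) : G.Dart ⊕ V ⊕ V → ℤ :=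
  Sum.elim (fun _ => b) (Sum.elim (fun v => g v) fun v => g v)

section DoubleCover

variable {V : Type*} [Fintype V] [DecidableEq V] {G : SimpleGraph V} [DecidableRel G.Adj]

lemma sum_incidenceFinset_eq_sum_dart {M : Type*} [AddCommMonoid M] (f : Sym2 V → M) (v : V) :
    ∑ e ∈ G.incidenceFinset v, f e = ∑ d : G.Dart with d.fst = v, f d.edge := by
  refine (sum_bij (fun d _ => d.edge) (fun d hd => ?_) (fun d₁ h₁ d₂ h₂ h => ?_)
    (fun e he => ?_) fun _ _ => rfl).symm
  · simp only [mem_filter, mem_univ, true_and] at hd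
    simp [SimpleGraph.incidenceSet, ← hd, SimpleGraph.Dart.edge, d.adj]
  · simp only [mem_filter, mem_univ, true_and] at h₁ h₂
    rcases (SimpleGraph.dart_edge_eq_iff d₁ d₂).1 h with h | rfl
    · exact h
    · exact absurd (h₂.trans h₁.symm) d₂.fst_ne_snd
  · rw [SimpleGraph.mem_incidenceFinset] at he
    obtain ⟨w, rfl⟩ := Sym2.mem_iff_exists.1 he.2
    exact ⟨⟨(v, w), he.1⟩, by simp, rfl⟩

lemma sum_dart_snd_eq {M : Type*} [AddCommMonoid M] (f : G.Dart → M) (v : V) :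
    ∑ d : G.Dart with d.snd = v, f d = ∑ d : G.Dart with d.fst = v, f d.symm :=
  sum_nbij' (·.symm) (·.symm) (by simp) (by simp) (by simp) (by simp) (by simp)

noncomputable def edgeAverage (z : G.Dart → ℝ) (e : Sym2 V) : ℝ :=
  (∑ d : G.Dart with d.edge = e, z d) / 2

lemma edgeAverage_edge (z : G.Dart → ℝ) (d : G.Dart) :
    edgeAverage z d.edge = (z d + z d.symm) / 2 := by
  rw [edgeAverage, SimpleGraph.Dart.edge_fiber, sum_pair d.symm_ne.symm]

lemma sum_incidenceFinset_edgeAverage (z : G.Dart → ℝ) (v : V) :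
    ∑ e ∈ G.incidenceFinset v, edgeAverage z e =
      (∑ d : G.Dart with d.fst = v, z d + ∑ d : G.Dart with d.snd = v, z d) / 2 := by
  simp only [sum_incidenceFinset_eq_sum_dart, edgeAverage_edge, sum_dart_snd_eq, ← sum_add_distrib,
    sum_div]

abbrev DoubleCoverFeasible (G : SimpleGraph V) [DecidableRel G.Adj] (g f : V → ℕ)
    (z : G.Dart → ℝ) : Prop :=
  Feasible (bipartiteForms (fun d : G.Dart => d.fst) fun d => d.snd) (dartBounds G 0 g)
    (dartBounds G 1 f) z

lemma doubleCoverFeasible_iff {g f : V → ℕ} {z : G.Dart → ℝ} :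
    DoubleCoverFeasible G g f z ↔ (∀ d, 0 ≤ z d ∧ z d ≤ 1) ∧
      (∀ v, g v ≤ ∑ d : G.Dart with d.fst = v, z d ∧ ∑ d : G.Dart with d.fst = v, z d ≤ f v) ∧
      ∀ v, g v ≤ ∑ d : G.Dart with d.snd = v, z d ∧ ∑ d : G.Dart with d.snd = v, z d ≤ f v := by
  simp [Feasible, Sum.forall, bipartiteForms, dartBounds]

lemma feasible_of_isFracFactor {g f : V → ℕ} {h : Sym2 V → ℝ} (hh : IsFracFactor G g f h) :
    DoubleCoverFeasible G g f fun d => h d.edge := by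
  refine doubleCoverFeasible_iff.2 ⟨fun d => hh.1 d.edge (SimpleGraph.mem_edgeFinset.2 d.edge_mem),
    fun v => ?_, fun v => ?_⟩
  · simpa [sum_incidenceFinset_eq_sum_dart] using hh.2 v
  · simpa [sum_incidenceFinset_eq_sum_dart, sum_dart_snd_eq] using hh.2 v

lemma isFracFactor_edgeAverage {g f : V → ℕ} {z : G.Dart → ℝ}
    (hz : DoubleCoverFeasible G g f z) : IsFracFactor G g f (edgeAverage z) := by
  obtain ⟨hdart, hout, hin⟩ := doubleCoverFeasible_iff.1 hz
  refine ⟨fun e he => ?_, fun v => ?_⟩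
  · obtain ⟨d, rfl⟩ := exists_dart_edge_eq (SimpleGraph.mem_edgeFinset.1 he)
    obtain ⟨hd₀, hd₁⟩ := hdart d
    obtain ⟨hs₀, hs₁⟩ := hdart d.symm
    rw [edgeAverage_edge]
    constructor <;> linarith
  · obtain ⟨hout₀, hout₁⟩ := hout v
    obtain ⟨hin₀, hin₁⟩ := hin v
    rw [sum_incidenceFinset_edgeAverage]
    constructor <;> linarith

lemma edgeAverage_eq_zero_or_half_or_one {g f : V → ℕ} {z : G.Dart → ℝ}
    (hz : DoubleCoverFeasible G g f z) (hzint : ∀ d, z d ∈ (⊥ : Subring ℝ)) {e : Sym2 V}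
    (he : e ∈ G.edgeFinset) :
    edgeAverage z e = 0 ∨ edgeAverage z e = 1 / 2 ∨ edgeAverage z e = 1 := by
  obtain ⟨d, rfl⟩ := exists_dart_edge_eq (SimpleGraph.mem_edgeFinset.1 he)
  have hdart := (doubleCoverFeasible_iff.1 hz).1
  rw [edgeAverage_edge]
  rcases eq_zero_or_eq_one_of_mem_bot (hzint d) (hdart d).1 (hdart d).2 with h | h <;>
    rcases eq_zero_or_eq_one_of_mem_bot (hzint d.symm) (hdart d.symm).1 (hdart d.symm).2
      with h' | h' <;>
    norm_num [h, h']

end DoubleCover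

theorem zhang_half_integral_fractional_factor_general {V : Type*} [Fintype V] [DecidableEq V]
    (G : SimpleGraph V) [DecidableRel G.Adj] (g f : V → ℕ)
    (hex : ∃ h : Sym2 V → ℝ, IsFracFactor G g f h) :
    ∃ h : Sym2 V → ℝ, IsFracFactor G g f h ∧
      ∀ e ∈ G.edgeFinset, h e = 0 ∨ h e = 1 / 2 ∨ h e = 1 := by
  obtain ⟨h, hh⟩ := hex
  obtain ⟨z, hz, hzint⟩ := exists_integral_feasible_bipartite _ _ (feasible_of_isFracFactor hh)
  exact ⟨edgeAverage z, isFracFactor_edgeAverage hz,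
    fun e he => edgeAverage_eq_zero_or_half_or_one hz hzint he⟩

/-- **Theorem 4 (Zhang).** If `G` has a fractional `(g,f)`-factor, then it has one whose
indicator function takes only the values `0`, `1/2`, `1` on the edges of `G`. -/
theorem zhang_half_integral_fractional_factor {V : Type*} [Fintype V] [DecidableEq V]
    (G : SimpleGraph V) [DecidableRel G.Adj] (g f : V → ℕ) (hgf : ∀ v, g v ≤ f v)
    (hex : ∃ h : Sym2 V → ℝ, IsFracFactor G g f h) :
    ∃ h : Sym2 V → ℝ, IsFracFactor G g f h ∧
      ∀ e ∈ G.edgeFinset, h e = 0 ∨ h e = 1 / 2 ∨ h e = 1 :=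
  zhang_half_integral_fractional_factor_general G g f hex
end

section
/- Let a < b be positive integers and m a positive integer, and let G = K_{bm} + (am+1)K_1, which has order n = (a+b)m + 1. Then for any two nonadjacent vertices u and v of G (both necessarily in the independent part), bn/(a+b) > |N_G(u) ∪ N_G(v)| = bm > bn/(a+b) − 1. Consequently the neighborhood-union bound bn/(a+b) in the sufficient condition for all fractional [a,b]-factors cannot be replaced by bn/(a+b) − 1. -/
open Finset
open scoped Classical

/-!
Two distinct nonadjacent vertices of `K_{bm} + (am+1)K₁` both lie in the independent part, so
each of their neighborhoods is the whole clique. With `n = (a+b)m + 1` one has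
`bn/(a+b) = bm + b/(a+b)`, and `0 < b/(a+b) < 1` because `a` and `b` are positive.
-/

/-- The graph `K_{bm} + (am+1)K₁`: the join of a complete graph on `bm` vertices (the left
summands) with an edgeless graph on `am+1` vertices (the right summands). -/
def joinGraph (a b m : ℕ) : SimpleGraph (Fin (b * m) ⊕ Fin (a * m + 1)) :=
  SimpleGraph.fromRel fun x y => x.isLeft ∨ y.isLeft

namespace joinGraph

variable {a b m : ℕ}

@[simp]
theorem adj_iff {x y : Fin (b * m) ⊕ Fin (a * m + 1)} :
    (joinGraph a b m).Adj x y ↔ x ≠ y ∧ (x.isLeft ∨ y.isLeft) := by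
  simp only [joinGraph, SimpleGraph.fromRel_adj, or_comm (b := y.isLeft = true), or_self]

theorem not_isLeft_of_not_adj {u v : Fin (b * m) ⊕ Fin (a * m + 1)} (huv : u ≠ v)
    (hadj : ¬ (joinGraph a b m).Adj u v) : ¬ u.isLeft ∧ ¬ v.isLeft := by
  simpa [huv, not_or] using hadj

theorem neighborFinset_of_not_isLeft {w : Fin (b * m) ⊕ Fin (a * m + 1)} (hw : ¬ w.isLeft) :
    (joinGraph a b m).neighborFinset w = univ.map (Function.Embedding.inl) := by
  ext x
  cases x <;> cases w <;> simp_all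

theorem card_neighborFinset_union_of_not_adj {u v : Fin (b * m) ⊕ Fin (a * m + 1)}
    (huv : u ≠ v) (hadj : ¬ (joinGraph a b m).Adj u v) :
    ((joinGraph a b m).neighborFinset u ∪ (joinGraph a b m).neighborFinset v).card = b * m := by
  obtain ⟨hu, hv⟩ := not_isLeft_of_not_adj huv hadj
  rw [neighborFinset_of_not_isLeft hu, neighborFinset_of_not_isLeft hv, union_self, card_map,
    card_univ, Fintype.card_fin]

end joinGraph

theorem mul_add_one_div_eq {K : Type*} [Field K] {a b m : K} (hab : a + b ≠ 0) :
    b * ((a + b) * m + 1) / (a + b) = b * m + b / (a + b) := by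
  field_simp

theorem join_graph_neighborhood_union_general (a b m : ℕ) (ha : 0 < a) (hab : a < b)
    (u v : Fin (b * m) ⊕ Fin (a * m + 1)) (huv : u ≠ v)
    (hadj : ¬ (joinGraph a b m).Adj u v) :
    Fintype.card (Fin (b * m) ⊕ Fin (a * m + 1)) = (a + b) * m + 1 ∧
    (((joinGraph a b m).neighborFinset u ∪ (joinGraph a b m).neighborFinset v).card : ℝ) =
      (b : ℝ) * m ∧
    (b : ℝ) * (Fintype.card (Fin (b * m) ⊕ Fin (a * m + 1))) / ((a : ℝ) + b) >
      (b : ℝ) * m ∧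
    (b : ℝ) * m >
      (b : ℝ) * (Fintype.card (Fin (b * m) ⊕ Fin (a * m + 1))) / ((a : ℝ) + b) - 1 := by
  have hcard : Fintype.card (Fin (b * m) ⊕ Fin (a * m + 1)) = (a + b) * m + 1 := by
    rw [Fintype.card_sum, Fintype.card_fin, Fintype.card_fin]
    ring
  have ha' : (0 : ℝ) < a := by exact_mod_cast ha
  have hb' : (0 : ℝ) < b := by exact_mod_cast ha.trans hab
  have hfrac : 0 < (b : ℝ) / (a + b) ∧ (b : ℝ) / (a + b) < 1 :=
    ⟨by positivity, (div_lt_one (by positivity)).2 (by linarith)⟩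
  have hbn : (b : ℝ) * (Fintype.card (Fin (b * m) ⊕ Fin (a * m + 1))) / (a + b) =
      b * m + b / (a + b) := by
    rw [hcard]
    push_cast
    exact mul_add_one_div_eq (by positivity)
  refine ⟨hcard, ?_, ?_, ?_⟩
  · exact_mod_cast joinGraph.card_neighborFinset_union_of_not_adj huv hadj
  · rw [hbn]; linarith
  · rw [hbn]; linarith

/-- **Sharpness of the neighborhood-union bound.** `G = K_{bm} + (am+1)K₁` has order
`n = (a+b)m + 1`, and for any two nonadjacent vertices `u ≠ v` of `G`,
`bn/(a+b) > |N_G(u) ∪ N_G(v)| = bm > bn/(a+b) − 1`. -/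
theorem join_graph_neighborhood_union (a b m : ℕ) (ha : 0 < a) (hab : a < b) (hm : 0 < m)
    (u v : Fin (b * m) ⊕ Fin (a * m + 1)) (huv : u ≠ v)
    (hadj : ¬ (joinGraph a b m).Adj u v) :
    Fintype.card (Fin (b * m) ⊕ Fin (a * m + 1)) = (a + b) * m + 1 ∧
    (((joinGraph a b m).neighborFinset u ∪ (joinGraph a b m).neighborFinset v).card : ℝ) =
      (b : ℝ) * m ∧
    (b : ℝ) * (Fintype.card (Fin (b * m) ⊕ Fin (a * m + 1))) / ((a : ℝ) + b) >
      (b : ℝ) * m ∧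
    (b : ℝ) * m >
      (b : ℝ) * (Fintype.card (Fin (b * m) ⊕ Fin (a * m + 1))) / ((a : ℝ) + b) - 1 :=
  join_graph_neighborhood_union_general a b m ha hab u v huv hadj
end

section
/- Let a < b be positive integers and let G be a finite simple graph of order n with minimum degree δ(G) ≥ ((a+b−1)² + 4b)/(4a). Let S ⊆ V(G) and T = {v ∈ V(G) − S : d_{G−S}(v) < b}, and suppose T ≠ ∅. Let h₁ = min{d_{G−S}(v) : v ∈ T} attained at x₁ ∈ T, and suppose T = N_T[x₁] (every vertex of T other than x₁ is adjacent to x₁ in G). Then a|S| − b|T| + Σ_{x∈T} d_{G−S}(x) ≥ 0. -/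
open Finset

/-- **Case 1 of the proof of Theorem 7.** If `δ(G) ≥ ((a+b−1)² + 4b)/(4a)`,
`T = {v ∈ V(G)−S : d_{G−S}(v) < b}` is nonempty, `h₁ = min{d_{G−S}(v) : v ∈ T}` is
attained at `x₁ ∈ T`, and `T = N_T[x₁]`, then
`a|S| − b|T| + Σ_{x∈T} d_{G−S}(x) ≥ 0`. -/
theorem case_one_criterion {V : Type*} [Fintype V] [DecidableEq V]
    (G : SimpleGraph V) [DecidableRel G.Adj] (a b : ℕ) (ha : 0 < a) (hab : a < b)
    (hδ : (G.minDegree : ℝ) ≥ (((a : ℝ) + b - 1) ^ 2 + 4 * b) / (4 * a))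
    (S : Finset V) (x₁ : V) (h₁ : ℕ)
    (hx₁ : x₁ ∈ Tset G (fun _ => b) S)
    (hd₁ : dOut G S x₁ = h₁)
    (hmin₁ : ∀ v ∈ Tset G (fun _ => b) S, h₁ ≤ dOut G S v)
    (hT : Tset G (fun _ => b) S =
      (G.neighborFinset x₁ ∩ Tset G (fun _ => b) S) ∪ {x₁}) :
    0 ≤ (a : ℤ) * S.card - (b : ℤ) * (Tset G (fun _ => b) S).card +
        ∑ x ∈ Tset G (fun _ => b) S, (dOut G S x : ℤ) := by
  classical
  set T := Tset G (fun _ => b) S with hTdef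
  have hx₁' : x₁ ∉ S ∧ dOut G S x₁ < b := by
    have := hx₁; simp only [hTdef, Tset, mem_filter, mem_compl] at this; exact this
  have hlt : h₁ < b := hd₁ ▸ hx₁'.2
  have hsub : G.neighborFinset x₁ ∩ T ⊆ G.neighborFinset x₁ \ S := by
    intro v hv
    rw [mem_inter] at hv
    have hvT := hv.2
    simp only [hTdef, Tset, mem_filter, mem_compl] at hvT
    exact mem_sdiff.mpr ⟨hv.1, hvT.1⟩
  have hts : T.card ≤ h₁ + 1 := by
    have h1 : T.card ≤ (G.neighborFinset x₁ ∩ T).card + 1 := by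
      conv_lhs => rw [hT]
      exact (card_union_le _ _).trans (by simp)
    have h2 : (G.neighborFinset x₁ ∩ T).card ≤ h₁ := by
      have := card_le_card hsub
      have hd : (G.neighborFinset x₁ \ S).card = h₁ := hd₁
      omega
    omega
  have ht1 : 1 ≤ T.card := card_pos.mpr ⟨x₁, hx₁⟩
  have hsum : (h₁ : ℤ) * T.card ≤ ∑ x ∈ T, (dOut G S x : ℤ) := by
    calc (h₁ : ℤ) * T.card = ∑ _x ∈ T, (h₁ : ℤ) := by
          rw [sum_const, nsmul_eq_mul, mul_comm]
      _ ≤ _ := sum_le_sum fun v hv => by exact_mod_cast hmin₁ v hv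
  have hS : G.minDegree ≤ h₁ + S.card := by
    have h1 : G.minDegree ≤ G.degree x₁ := G.minDegree_le_degree x₁
    have h2 : G.degree x₁ ≤ h₁ + S.card := by
      rw [← SimpleGraph.card_neighborFinset_eq_degree]
      have hss : G.neighborFinset x₁ ⊆ (G.neighborFinset x₁ \ S) ∪ S := by
        intro v hv; by_cases h : v ∈ S <;> simp [hv, h]
      have := (card_le_card hss).trans (card_union_le _ _)
      have hd : (G.neighborFinset x₁ \ S).card = h₁ := hd₁
      omega
    omega
  have ha4 : (0:ℝ) < 4 * a := by positivity
  have hδ' : ((a:ℝ) + b - 1) ^ 2 + 4 * b ≤ 4 * a * G.minDegree := by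
    rw [ge_iff_le, div_le_iff₀ ha4] at hδ
    linarith
  have key : (0:ℝ) ≤ (a : ℝ) * S.card - (b : ℝ) * T.card +
      ((∑ x ∈ T, (dOut G S x : ℤ) : ℤ) : ℝ) := by
    have hsumR : (h₁ : ℝ) * T.card ≤ ((∑ x ∈ T, (dOut G S x : ℤ) : ℤ) : ℝ) := by
      exact_mod_cast hsum
    have htsR : (T.card : ℝ) ≤ h₁ + 1 := by exact_mod_cast hts
    have ht1R : (1:ℝ) ≤ T.card := by exact_mod_cast ht1
    have hSR : (G.minDegree : ℝ) ≤ h₁ + S.card := by exact_mod_cast hS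
    have hltR : (h₁ : ℝ) + 1 ≤ b := by exact_mod_cast hlt
    have haR : (1:ℝ) ≤ a := by exact_mod_cast ha
    nlinarith [sq_nonneg (2 * (h₁:ℝ) - ((a:ℝ) + b - 1)),
      mul_nonneg (by positivity : (0:ℝ) ≤ (a:ℝ))
        (by linarith : (0:ℝ) ≤ (S.card : ℝ) + h₁ - G.minDegree),
      mul_nonneg (by linarith : (0:ℝ) ≤ (b:ℝ) - h₁)
        (by linarith : (0:ℝ) ≤ (h₁:ℝ) + 1 - T.card)]
  exact_mod_cast key
end

section
/- Let a < b be positive integers and let G be a finite simple graph of order n ≥ 2(a+b)(a+b−1)/a such that |N_G(u) ∪ N_G(v)| ≥ bn/(a+b) for every pair of nonadjacent vertices u and v. Let S ⊆ V(G), T = {v ∈ V(G) − S : d_{G−S}(v) < b}, let h₁ = min{d_{G−S}(v) : v ∈ T} be attained at x₁ ∈ T, and suppose T − N_T[x₁] ≠ ∅ with h₂ = min{d_{G−S}(v) : v ∈ T − N_T[x₁]} attained at x₂. Then a|S| − b|T| + Σ_{x∈T} d_{G−S}(x) ≥ 0. -/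
/-!
Sum the degrees over `T`: the at most `h₁ + 1` vertices of `N_T[x₁]` contribute at least `h₁`
each, the others at least `h₂`, and `|T| ≤ n − |S|`. Since `x₁` and `x₂` are nonadjacent,
`bn/(a+b) ≤ |N(x₁) ∪ N(x₂)| ≤ h₁ + h₂ + |S|`, a lower bound on `|S|`. Together with
`an ≥ 2(a+b)(a+b−1)` this leaves a quadratic inequality in the integers `0 ≤ h₁ ≤ h₂ < b`.
-/

open Finset

namespace Finset

theorem card_nsmul_add_card_sdiff_nsmul_le_sum {ι M : Type*} [DecidableEq ι] [AddCommMonoid M]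
    [PartialOrder M] [IsOrderedAddMonoid M] {A T : Finset ι} (hAT : A ⊆ T) (g : ι → M)
    {c d : M} (hA : ∀ v ∈ A, c ≤ g v) (hTA : ∀ v ∈ T \ A, d ≤ g v) :
    #A • c + #(T \ A) • d ≤ ∑ v ∈ T, g v := by
  rw [← sum_sdiff hAT, add_comm]
  exact add_le_add (card_nsmul_le_sum _ _ _ hTA) (card_nsmul_le_sum _ _ _ hA)

end Finset

section Degrees

variable {V : Type*} [Fintype V] [DecidableEq V] (G : SimpleGraph V) [DecidableRel G.Adj]

theorem card_neighborFinset_union_le_dOut (S : Finset V) (u v : V) :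
    #(G.neighborFinset u ∪ G.neighborFinset v) ≤ dOut G S u + dOut G S v + #S :=
  calc #(G.neighborFinset u ∪ G.neighborFinset v)
      ≤ #((G.neighborFinset u ∪ G.neighborFinset v) \ S) + #S := card_le_card_sdiff_add_card
    _ ≤ dOut G S u + dOut G S v + #S := by
      rw [union_sdiff_distrib]
      exact Nat.add_le_add_right (card_union_le _ _) _

theorem disjoint_Tset (f : V → ℕ) (S : Finset V) : Disjoint S (Tset G f S) :=
  disjoint_compl_right.mono_right (filter_subset _ _)

theorem card_add_card_Tset_le (f : V → ℕ) (S : Finset V) :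
    #S + #(Tset G f S) ≤ Fintype.card V := by
  rw [← card_union_of_disjoint (disjoint_Tset G f S)]
  exact card_le_univ _

theorem card_closedNbhd_Tset_le (f : V → ℕ) (S : Finset V) (x : V) :
    #((G.neighborFinset x ∩ Tset G f S) ∪ {x}) ≤ dOut G S x + 1 := by
  have hsub : G.neighborFinset x ∩ Tset G f S ⊆ G.neighborFinset x \ S := fun v hv =>
    mem_sdiff.mpr ⟨(mem_inter.mp hv).1,
      fun hvS => disjoint_left.mp (disjoint_Tset G f S) hvS (mem_inter.mp hv).2⟩
  calc #((G.neighborFinset x ∩ Tset G f S) ∪ {x})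
      ≤ #(G.neighborFinset x ∩ Tset G f S) + #{x} := card_union_le _ _
    _ ≤ dOut G S x + 1 := Nat.add_le_add (card_le_card hsub) (card_singleton x).le

end Degrees

theorem case_two_margin_nonneg {a b n s h₁ h₂ : ℤ} (ha : 0 < a) (h₁_nonneg : 0 ≤ h₁)
    (h₁₂ : h₁ ≤ h₂) (h₂b : h₂ < b) (hn : 2 * (a + b) * (a + b - 1) ≤ a * n)
    (hs : b * n ≤ (a + b) * (h₁ + h₂ + s)) :
    (h₁ + 1) * (h₂ - h₁) + (b - h₂) * n ≤ (a + b - h₂) * s := by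
  have hab : 0 < a + b := by omega
  suffices (a + b) * ((h₁ + 1) * (h₂ - h₁) + (b - h₂) * n) ≤ (a + b) * ((a + b - h₂) * s) from
    le_of_mul_le_mul_left this hab
  have h_slack : 0 ≤ (h₂ - h₁) * (a + b - h₂ - 2) + h₂ * (h₂ - h₁) + h₁ * (h₁ - 1)
      + h₂ * (h₂ - 1) := by
    nlinarith [Int.le_self_sq h₁, Int.le_self_sq h₂]
  -- after multiplying by `a + b`, `hs` and `hn` turn the goal into exactly `h_slack`
  nlinarith [mul_le_mul_of_nonneg_left hs (by omega : 0 ≤ a + b - h₂),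
    mul_le_mul_of_nonneg_left hn (by omega : 0 ≤ h₂)]

theorem case_two_count_nonneg {a b n s m r h₁ h₂ σ : ℤ} (ha : 0 < a) (h₁_nonneg : 0 ≤ h₁)
    (h₁₂ : h₁ ≤ h₂) (h₂b : h₂ < b) (hn : 2 * (a + b) * (a + b - 1) ≤ a * n)
    (hs : b * n ≤ (a + b) * (h₁ + h₂ + s)) (hsn : s + (r + m) ≤ n) (hm : m ≤ h₁ + 1)
    (hσ : m * h₁ + r * h₂ ≤ σ) :
    0 ≤ a * s - b * (r + m) + σ := by
  have := case_two_margin_nonneg ha h₁_nonneg h₁₂ h₂b hn hs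
  nlinarith [mul_le_mul_of_nonneg_left hsn (by omega : 0 ≤ b - h₂),
    mul_le_mul_of_nonneg_right hm (by omega : 0 ≤ h₂ - h₁)]

theorem case_two_criterion_general {V : Type*} [Fintype V] [DecidableEq V]
    (G : SimpleGraph V) [DecidableRel G.Adj] (a b : ℕ) (ha : 0 < a)
    (hn : (Fintype.card V : ℝ) ≥ 2 * ((a : ℝ) + b) * ((a : ℝ) + b - 1) / a)
    (hnb : ∀ u v : V, u ≠ v → ¬ G.Adj u v →
      (((G.neighborFinset u ∪ G.neighborFinset v).card : ℝ)) ≥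
        (b : ℝ) * (Fintype.card V) / ((a : ℝ) + b))
    (S : Finset V) (x₁ x₂ : V) (h₁ h₂ : ℕ)
    (hx₁ : x₁ ∈ Tset G (fun _ => b) S)
    (hd₁ : dOut G S x₁ = h₁)
    (hmin₁ : ∀ v ∈ Tset G (fun _ => b) S, h₁ ≤ dOut G S v)
    (hx₂ : x₂ ∈ Tset G (fun _ => b) S \
      ((G.neighborFinset x₁ ∩ Tset G (fun _ => b) S) ∪ {x₁}))
    (hd₂ : dOut G S x₂ = h₂)
    (hmin₂ : ∀ v ∈ Tset G (fun _ => b) S \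
      ((G.neighborFinset x₁ ∩ Tset G (fun _ => b) S) ∪ {x₁}), h₂ ≤ dOut G S v) :
    0 ≤ (a : ℤ) * S.card - (b : ℤ) * (Tset G (fun _ => b) S).card +
        ∑ x ∈ Tset G (fun _ => b) S, (dOut G S x : ℤ) := by
  set T := Tset G (fun _ => b) S
  set A := (G.neighborFinset x₁ ∩ T) ∪ {x₁}
  obtain ⟨hx₂T, hx₂A⟩ := mem_sdiff.mp hx₂
  have hAT : A ⊆ T := union_subset inter_subset_right (singleton_subset_iff.mpr hx₁)
  have hne : x₁ ≠ x₂ := fun h => hx₂A (by simp [A, h])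
  have hnadj : ¬ G.Adj x₁ x₂ := fun h =>
    hx₂A (mem_union_left _ (mem_inter.mpr ⟨(G.mem_neighborFinset x₁ x₂).mpr h, hx₂T⟩))
  have h₂b : h₂ < b := hd₂ ▸ (mem_filter.mp hx₂T).2
  have hn' : 2 * ((a : ℤ) + b) * (a + b - 1) ≤ a * Fintype.card V := by
    rw [ge_iff_le, div_le_iff₀ (by positivity)] at hn
    exact_mod_cast (by linarith : 2 * ((a : ℝ) + b) * (a + b - 1) ≤ a * Fintype.card V)
  have hs : (b : ℤ) * Fintype.card V ≤ (a + b) * (h₁ + h₂ + #S) := by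
    have hcard := hnb x₁ x₂ hne hnadj
    rw [ge_iff_le, div_le_iff₀ (by positivity)] at hcard
    have hcover : (#(G.neighborFinset x₁ ∪ G.neighborFinset x₂) : ℝ) ≤ h₁ + h₂ + #S := by
      exact_mod_cast hd₁ ▸ hd₂ ▸ card_neighborFinset_union_le_dOut G S x₁ x₂
    exact_mod_cast (by nlinarith : (b : ℝ) * Fintype.card V ≤ (a + b) * (h₁ + h₂ + #S))
  have hsn : #S + (#(T \ A) + #A) ≤ Fintype.card V := by
    rw [card_sdiff_add_card_eq_card hAT]; exact card_add_card_Tset_le G _ S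
  have hσ := card_nsmul_add_card_sdiff_nsmul_le_sum hAT (fun x => (dOut G S x : ℤ))
    (c := h₁) (d := h₂) (fun v hv => by exact_mod_cast hmin₁ v (hAT hv))
    (fun v hv => by exact_mod_cast hmin₂ v hv)
  rw [← card_sdiff_add_card_eq_card hAT]
  push_cast
  exact case_two_count_nonneg (by exact_mod_cast ha) (Nat.cast_nonneg _)
    (by exact_mod_cast hd₂ ▸ hmin₁ x₂ hx₂T) (by exact_mod_cast h₂b) hn' hs
    (by exact_mod_cast hsn) (by exact_mod_cast hd₁ ▸ card_closedNbhd_Tset_le G _ S x₁)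
    (by simpa [nsmul_eq_mul, add_comm] using hσ)

/-- **Case 2 of the proof of Theorem 7.** Suppose `n ≥ 2(a+b)(a+b−1)/a` and
`|N_G(u) ∪ N_G(v)| ≥ bn/(a+b)` for all nonadjacent `u ≠ v`.  Let
`T = {v ∈ V(G)−S : d_{G−S}(v) < b}`, let `h₁ = min{d_{G−S}(v) : v ∈ T}` be attained at
`x₁ ∈ T`, suppose `T − N_T[x₁] ≠ ∅`, and let `h₂ = min{d_{G−S}(v) : v ∈ T − N_T[x₁]}`
be attained at `x₂`.  Then `a|S| − b|T| + Σ_{x∈T} d_{G−S}(x) ≥ 0`. -/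
theorem case_two_criterion {V : Type*} [Fintype V] [DecidableEq V]
    (G : SimpleGraph V) [DecidableRel G.Adj] (a b : ℕ) (ha : 0 < a) (hab : a < b)
    (hn : (Fintype.card V : ℝ) ≥ 2 * ((a : ℝ) + b) * ((a : ℝ) + b - 1) / a)
    (hnb : ∀ u v : V, u ≠ v → ¬ G.Adj u v →
      (((G.neighborFinset u ∪ G.neighborFinset v).card : ℝ)) ≥
        (b : ℝ) * (Fintype.card V) / ((a : ℝ) + b))
    (S : Finset V) (x₁ x₂ : V) (h₁ h₂ : ℕ)
    (hx₁ : x₁ ∈ Tset G (fun _ => b) S)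
    (hd₁ : dOut G S x₁ = h₁)
    (hmin₁ : ∀ v ∈ Tset G (fun _ => b) S, h₁ ≤ dOut G S v)
    (hx₂ : x₂ ∈ Tset G (fun _ => b) S \
      ((G.neighborFinset x₁ ∩ Tset G (fun _ => b) S) ∪ {x₁}))
    (hd₂ : dOut G S x₂ = h₂)
    (hmin₂ : ∀ v ∈ Tset G (fun _ => b) S \
      ((G.neighborFinset x₁ ∩ Tset G (fun _ => b) S) ∪ {x₁}), h₂ ≤ dOut G S v) :
    0 ≤ (a : ℤ) * S.card - (b : ℤ) * (Tset G (fun _ => b) S).card +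
        ∑ x ∈ Tset G (fun _ => b) S, (dOut G S x : ℤ) :=
  case_two_criterion_general G a b ha hn hnb S x₁ x₂ h₁ h₂ hx₁ hd₁ hmin₁ hx₂ hd₂ hmin₂
end
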